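/- arXiv:2010.09266 — 5 statements merged into one kernel-verified Lean document; each statement's English description precedes it below -/
import Mathlib

section
/- Let L be a field, K a subfield of L, and σ : L → L a ring endomorphism with σ(K) ⊆ K. Let g ∈ L be transcendental over K and suppose g satisfies a nontrivial linear σ-equation over K: there exist a₀,…,a_n ∈ K, not all zero, with a₀·g + a₁·σ(g) + ⋯ + a_n·σ^n(g) = 0. Let f ∈ L and suppose f and g are algebraically dependent over K, i.e., there is a nonzero two-variable polynomial P with coefficients in K such that P(f, g) = 0. Then f is σ-algebraic over K. -/
open scoped BigOperators

section SigmaAlgebraicAux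

variable {L : Type*} [Field L] {K : Subfield L}

private lemma aux_smul (k : K) (v : L) : (k : L) * v = k • v := by rw [Algebra.smul_def]; rfl

private lemma aux_iterK (σ : L →+* L) (hσK : ∀ k ∈ K, σ k ∈ K) :
    ∀ (i : ℕ), ∀ k ∈ K, σ^[i] k ∈ K := by
  intro i
  induction i with
  | zero => intro k hk; simpa using hk
  | succ i ih =>
    intro k hk
    rw [Function.iterate_succ_apply']
    exact hσK _ (ih k hk)

private lemma aux_pow_mono (Y : Submodule K L) (h1 : (1:L) ∈ Y) {a b : ℕ} (h : a ≤ b) :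
    Y ^ a ≤ Y ^ b := by
  obtain ⟨c, rfl⟩ : ∃ c, b = a + c := ⟨b - a, by omega⟩
  rw [pow_add]
  have h1c : (1:L) ∈ Y ^ c := by
    have := Submodule.pow_mem_pow Y h1 c; rwa [one_pow] at this
  intro z hz
  have : z * 1 ∈ Y ^ a * Y ^ c := Submodule.mul_mem_mul hz h1c
  rwa [mul_one] at this

private lemma aux_red (Z : Submodule K L) (d : ℕ) (hd : 1 ≤ d) (t : L) (r : ℕ → L)
    (hr : ∀ j ≤ d, r j ∈ Z) (hrel : ∑ j ∈ Finset.range (d+1), r j * t ^ j = 0) (e : ℕ) :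
    (r d) ^ e * t ^ e ∈ Z ^ e * Submodule.span K (Set.range fun j : Fin d => t ^ (j:ℕ)) := by
  obtain ⟨d', rfl⟩ : ∃ d', d = d' + 1 := ⟨d - 1, by omega⟩
  set d := d' + 1
  set T := Submodule.span K (Set.range fun j : Fin d => t ^ (j:ℕ)) with hT
  rw [Finset.sum_range_succ] at hrel
  have hsolve : r d * t ^ d = - ∑ j ∈ Finset.range d, r j * t ^ j := by
    linear_combination hrel
  induction e using Nat.strong_induction_on with
  | _ e IH =>
  by_cases he : e < d
  · exact Submodule.mul_mem_mul (Submodule.pow_mem_pow _ (hr d le_rfl) e)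
      (Submodule.subset_span ⟨⟨e, he⟩, rfl⟩)
  · push_neg at he
    obtain ⟨k, rfl⟩ : ∃ k, e = k + d := ⟨e - d, by omega⟩
    have hkey : (r d) ^ (k+d) * t ^ (k+d)
        = - ∑ j ∈ Finset.range d, r j * ((r d) ^ (k + d') * t ^ (k + j)) := by
      calc (r d) ^ (k+d) * t ^ (k+d)
          = (r d ^ (k+d') * t ^ k) * (r d * t ^ d) := by show _ = _ * (_ * t ^ (d'+1)); ring
        _ = (r d ^ (k+d') * t ^ k) * (- ∑ j ∈ Finset.range d, r j * t ^ j) := by rw [hsolve]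
        _ = - ∑ j ∈ Finset.range d, r j * ((r d) ^ (k + d') * t ^ (k + j)) := by
            rw [mul_neg, Finset.mul_sum, neg_inj]
            refine Finset.sum_congr rfl fun j hj => ?_
            rw [pow_add]; ring
    rw [hkey]
    apply Submodule.neg_mem
    apply Submodule.sum_mem
    intro j hj
    rw [Finset.mem_range] at hj
    obtain ⟨i, hi⟩ : ∃ i, d' = j + i := ⟨d' - j, by omega⟩
    have hfact : r j * ((r d) ^ (k + d') * t ^ (k + j))
        = (r j * (r d) ^ i) * ((r d) ^ (k + j) * t ^ (k + j)) := by
      rw [hi, show k + (j + i) = i + (k + j) by ring, pow_add]; ring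
    rw [hfact]
    have hZ : r j * (r d) ^ i ∈ Z ^ (i + 1) := by
      rw [pow_succ']
      exact Submodule.mul_mem_mul (hr j (by omega)) (Submodule.pow_mem_pow _ (hr d le_rfl) i)
    have hmem2 := IH (k + j) (by omega)
    have hps : Z ^ (i+1) * (Z ^ (k+j) * T) = Z ^ (k + d) * T := by
      rw [← mul_assoc, ← pow_add]
      congr 2
      omega
    rw [← hps]
    exact Submodule.mul_mem_mul hZ hmem2

private lemma aux_prod_mem_prod {ι : Type*} [DecidableEq ι] (s : Finset ι) (v : ι → L)
    (M : ι → Submodule K L) (h : ∀ i ∈ s, v i ∈ M i) :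
    (∏ i ∈ s, v i) ∈ ∏ i ∈ s, M i := by
  induction s using Finset.induction_on with
  | empty =>
    rw [Finset.prod_empty, Finset.prod_empty]
    exact Submodule.one_le.mp le_rfl
  | insert _ _ hns ih =>
    rw [Finset.prod_insert hns, Finset.prod_insert hns]
    exact Submodule.mul_mem_mul (h _ (Finset.mem_insert_self _ _))
      (ih fun i hi => h i (Finset.mem_insert_of_mem hi))

private lemma aux_range_mul_le {ι κ : Type*} (u : ι → L) (w : κ → L) :
    Submodule.span K (Set.range u) * Submodule.span K (Set.range w) ≤
      Submodule.span K (Set.range fun p : ι × κ => u p.1 * w p.2) := by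
  rw [Submodule.span_mul_span]
  apply Submodule.span_mono
  rintro z hz
  rw [Set.mem_mul] at hz
  obtain ⟨x, ⟨i, rfl⟩, y, ⟨j, rfl⟩, rfl⟩ := hz
  exact ⟨(i, j), rfl⟩

private lemma aux_span_pow_le (m : ℕ) (v : Fin m → L) (A : ℕ) :
    (Submodule.span K (insert 1 (Set.range v))) ^ A ≤
      Submodule.span K (Set.range fun k : Fin m → Fin (A+1) => ∏ j, v j ^ (k j : ℕ)) := by
  induction A with
  | zero =>
    rw [pow_zero]
    rw [Submodule.one_eq_span]
    apply Submodule.span_mono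
    rintro z rfl
    exact ⟨fun _ => 0, by simp⟩
  | succ A ih =>
    rw [pow_succ]
    refine le_trans (mul_le_mul' ih le_rfl) ?_
    rw [Submodule.span_mul_span]
    rw [Submodule.span_le]
    rintro z hz
    rw [Set.mem_mul] at hz
    obtain ⟨x, ⟨k, rfl⟩, y, hy, rfl⟩ := hz
    rcases Set.mem_insert_iff.mp hy with rfl | ⟨j₀, rfl⟩
    · apply Submodule.subset_span
      refine ⟨fun j => (k j).castSucc, ?_⟩
      simp
    · apply Submodule.subset_span
      classical
      refine ⟨fun j => if j = j₀ then (k j).succ else (k j).castSucc, ?_⟩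
      dsimp only
      have : ∀ j : Fin m, v j ^ (((if j = j₀ then (k j).succ else (k j).castSucc : Fin (A+2))) : ℕ)
          = v j ^ (k j : ℕ) * (if j = j₀ then v j else 1) := by
        intro j
        by_cases hj : j = j₀ <;> simp [hj, pow_succ]
      rw [Finset.prod_congr rfl fun j _ => this j, Finset.prod_mul_distrib]
      simp

private lemma aux_prod_T_le (M : ℕ) (d : ℕ) (hd : 0 < d) (x : Fin M → L) :
    (∏ i : Fin M, Submodule.span K (Set.range fun j : Fin d => x i ^ (j:ℕ))) ≤
      Submodule.span K (Set.range fun ε : Fin M → Fin d => ∏ i, x i ^ (ε i : ℕ)) := by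
  classical
  have key : ∀ s : Finset (Fin M),
      (∏ i ∈ s, Submodule.span K (Set.range fun j : Fin d => x i ^ (j:ℕ))) ≤
      Submodule.span K (Set.range fun ε : Fin M → Fin d => ∏ i ∈ s, x i ^ (ε i : ℕ)) := by
    intro s
    induction s using Finset.induction_on with
    | empty =>
      intro z hz
      simp only [Finset.prod_empty] at hz ⊢
      rw [Submodule.one_eq_span] at hz
      refine Submodule.span_le.mpr ?_ hz
      rintro w rfl
      exact Submodule.subset_span ⟨fun _ => ⟨0, hd⟩, by simp⟩
    | insert _ _ hns ih =>
      rename_i a s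
      rw [Finset.prod_insert hns]
      refine le_trans (mul_le_mul' le_rfl ih) ?_
      rw [Submodule.span_mul_span, Submodule.span_le]
      rintro z hz
      rw [Set.mem_mul] at hz
      obtain ⟨u, ⟨j, rfl⟩, w, ⟨ε, rfl⟩, rfl⟩ := hz
      apply Submodule.subset_span
      refine ⟨Function.update ε a j, ?_⟩
      dsimp only
      rw [Finset.prod_insert hns, Function.update_self]
      congr 1
      exact Finset.prod_congr rfl fun i hi => by
        rw [Function.update_of_ne (ne_of_mem_of_not_mem hi hns)]
  exact key Finset.univ

private lemma aux_gspan (σ : L →+* L) (hσK : ∀ k ∈ K, σ k ∈ K) (g : L) (hg0 : g ≠ 0)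
    (n : ℕ) (a : Fin (n + 1) → K) (i₀ : Fin (n+1)) (ha0 : a i₀ ≠ 0)
    (hrel : ∑ i : Fin (n + 1), (a i : L) * σ^[(i : ℕ)] g = 0) :
    ∃ m : ℕ, 1 ≤ m ∧ ∀ s : ℕ, σ^[s] g ∈
      Submodule.span K (insert 1 (Set.range fun j : Fin m => σ^[(j:ℕ)] g)) := by
  classical
  set A : Finset (Fin (n+1)) := Finset.univ.filter (fun i => a i ≠ 0) with hA
  have hAne : A.Nonempty := ⟨i₀, by simp [hA, ha0]⟩
  set M : Fin (n+1) := A.max' hAne with hM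
  have haM : a M ≠ 0 := by
    have h := A.max'_mem hAne
    simp only [hA, Finset.mem_filter] at h
    exact h.2
  have hlt : ∀ i, M < i → a i = 0 := by
    intro i hi
    by_contra h
    exact absurd (A.le_max' i (by simp [hA, h])) (not_le.mpr hi)
  set m : ℕ := (M : ℕ) with hm
  have hm1 : 1 ≤ m := by
    by_contra h
    have hv : (M : ℕ) = 0 := by omega
    have hM0 : M = 0 := Fin.ext (by simpa using hv)
    have : ∑ i : Fin (n + 1), (a i : L) * σ^[(i : ℕ)] g = (a 0 : L) * g := by
      rw [Finset.sum_eq_single 0]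
      · simp
      · intro i _ hi
        have : a i = 0 := hlt i (by
          rw [Fin.lt_def, hM0]
          simpa using Fin.pos_iff_ne_zero.mpr hi)
        simp [this]
      · simp
    rw [this] at hrel
    rcases mul_eq_zero.mp hrel with h' | h'
    · rw [hM0] at haM
      exact haM (by rwa [ZeroMemClass.coe_eq_zero] at h')
    · exact hg0 h'
  refine ⟨m, hm1, ?_⟩
  set Y := Submodule.span K (insert 1 (Set.range fun j : Fin m => σ^[(j:ℕ)] g)) with hY
  intro s
  induction s using Nat.strong_induction_on with
  | _ s IH =>
  by_cases hs : s < m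
  · exact Submodule.subset_span (Set.mem_insert_of_mem _ ⟨⟨s, hs⟩, rfl⟩)
  · push_neg at hs
    obtain ⟨t, rfl⟩ : ∃ t, s = t + m := ⟨s - m, by omega⟩
    have hshift : ∑ i : Fin (n + 1), σ^[t] ((a i : L)) * σ^[t + (i:ℕ)] g = 0 := by
      have := congrArg (σ ^ t : L →+* L) hrel
      rw [map_sum, map_zero] at this
      rw [← this]
      refine Finset.sum_congr rfl fun i _ => ?_
      rw [map_mul]
      simp only [RingHom.coe_pow]
      rw [Function.iterate_add_apply]
    set b : Fin (n+1) → K := fun i => ⟨σ^[t] ((a i : L)), aux_iterK σ hσK t _ (a i).2⟩ with hb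
    have hbM : (b M : L) ≠ 0 := by
      simp only [hb]
      intro h
      have h0 : σ^[t] ((a M : L)) = σ^[t] 0 := by
        simpa using h
      have := Function.Injective.iterate σ.injective t h0
      exact haM (by rwa [ZeroMemClass.coe_eq_zero] at this)
    have h1 : (b M : L) * σ^[t + m] g
        = - ∑ i ∈ Finset.univ.erase M, (b i : L) * σ^[t + (i:ℕ)] g := by
      rw [← Finset.sum_erase_add _ _ (Finset.mem_univ M)] at hshift
      simp only [hb]
      linear_combination hshift
    have h2 : σ^[t + m] g = ∑ i ∈ Finset.univ.erase M,
        (-((b M)⁻¹ * (b i)) : K) • σ^[t + (i:ℕ)] g := by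
      have hstep : σ^[t + m] g = (b M : L)⁻¹ * ((b M : L) * σ^[t + m] g) := by
        field_simp
      rw [h1, mul_neg, Finset.mul_sum] at hstep
      rw [hstep, ← Finset.sum_neg_distrib]
      refine Finset.sum_congr rfl fun i hi => ?_
      rw [← aux_smul]
      push_cast
      ring
    rw [h2]
    apply Submodule.sum_mem
    intro i hi
    have hiM : i ≠ M := Finset.ne_of_mem_erase hi
    rcases lt_or_gt_of_ne hiM with hlt' | hgt
    · exact Submodule.smul_mem _ _ (IH (t + (i:ℕ)) (by
        have : (i:ℕ) < m := hlt'
        omega))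
    · have hai : a i = 0 := hlt i hgt
      have hbi : (b i : L) = 0 := by
        simp [hb, hai]
      have hbi0 : b i = 0 := by
        rw [← ZeroMemClass.coe_eq_zero]
        exact hbi
      rw [hbi0, mul_zero, neg_zero, zero_smul]
      exact Submodule.zero_mem _

private lemma aux_eval2 (f g : L) (P : MvPolynomial (Fin 2) K) :
    MvPolynomial.aeval ![f, g] P =
      Polynomial.eval₂ ((MvPolynomial.aeval (fun _ : Fin 1 => g)).toRingHom) f
        (MvPolynomial.finSuccEquiv K 1 P) := by
  have h : ((MvPolynomial.aeval (R := K) ![f, g]).toRingHom : MvPolynomial (Fin 2) K →+* L) =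
      (Polynomial.eval₂RingHom ((MvPolynomial.aeval (fun _ : Fin 1 => g)).toRingHom) f).comp
        (MvPolynomial.finSuccEquiv K 1).toAlgHom.toRingHom := by
    apply MvPolynomial.ringHom_ext
    · intro r
      simp [MvPolynomial.finSuccEquiv_apply]
    · intro i
      refine Fin.cases ?_ ?_ i
      · simp [MvPolynomial.finSuccEquiv_X_zero]
      · intro j
        have hj : j = 0 := Subsingleton.elim _ _
        subst hj
        rw [RingHom.comp_apply]
        rw [show ((MvPolynomial.finSuccEquiv K 1).toAlgHom.toRingHom (MvPolynomial.X (0:Fin 1).succ) :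
            Polynomial (MvPolynomial (Fin 1) K)) = Polynomial.C (MvPolynomial.X 0) from
          MvPolynomial.finSuccEquiv_X_succ]
        simp
  have := congrFun (congrArg (fun (h : MvPolynomial (Fin 2) K →+* L) =>
    (h : MvPolynomial (Fin 2) K → L)) h) P
  simpa using this

private lemma aux_coeff_mem (σ : L →+* L)
    (hiterK : ∀ (i : ℕ), ∀ k ∈ K, σ^[i] k ∈ K)
    (g : L) (Y : Submodule K L) (h1 : (1:L) ∈ Y) (hgY : ∀ i : ℕ, σ^[i] g ∈ Y)
    (D : ℕ) (q : MvPolynomial (Fin 1) K) (hq : q.totalDegree ≤ D) (i : ℕ) :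
    σ^[i] (MvPolynomial.aeval (fun _ : Fin 1 => g) q) ∈ Y ^ D := by
  have hco : (⇑σ)^[i] = ⇑(σ ^ i : L →+* L) := (RingHom.coe_pow σ i).symm
  rw [MvPolynomial.aeval_def, MvPolynomial.eval₂_eq', hco, map_sum]
  apply Submodule.sum_mem
  intro s hs
  rw [map_mul]
  have hs0 : s 0 ≤ D := by
    refine le_trans ?_ hq
    have := MvPolynomial.le_totalDegree (p := q) hs
    refine le_trans ?_ this
    rw [Finsupp.sum_fintype]
    · simp
    · simp
  have hcoef : (σ ^ i : L →+* L) (algebraMap K L (MvPolynomial.coeff s q)) ∈ K := by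
    rw [← hco]
    exact hiterK i _ (MvPolynomial.coeff s q).2
  have hpow : (σ ^ i : L →+* L) (∏ j : Fin 1, g ^ s j) ∈ Y ^ D := by
    rw [Fin.prod_univ_one, map_pow]
    have : ((σ ^ i : L →+* L) g) ^ (s 0) ∈ Y ^ (s 0) := by
      rw [← hco]
      exact Submodule.pow_mem_pow _ (hgY i) _
    exact aux_pow_mono Y h1 hs0 this
  rw [show (σ ^ i : L →+* L) (algebraMap K L (MvPolynomial.coeff s q)) =
      ((⟨_, hcoef⟩ : K) : L) from rfl, aux_smul]
  exact Submodule.smul_mem _ _ hpow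

private lemma aux_card_le {I E : Type} [Fintype I] [Fintype E] (Φ : I → L) (ψ : E → L)
    (hli : LinearIndependent K ψ) (hmem : ∀ e, ψ e ∈ Submodule.span K (Set.range Φ)) :
    Fintype.card E ≤ Fintype.card I := by
  set S := Submodule.span K (Set.range Φ) with hS
  haveI : FiniteDimensional K S := FiniteDimensional.span_of_finite K (Set.finite_range Φ)
  set ψ' : E → S := fun e => ⟨ψ e, hmem e⟩ with hψ'
  have hli' : LinearIndependent K ψ' := by
    apply LinearIndependent.of_comp S.subtype
    exact hli
  calc Fintype.card E ≤ Module.finrank K S := hli'.fintype_card_le_finrank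
    _ ≤ Fintype.card I := finrank_range_le_card Φ

end SigmaAlgebraicAux

set_option maxHeartbeats 1000000

/-- if `g ∈ L` is transcendental over `K` and satisfies a nontrivial
linear `σ`-equation over `K`, then any `f ∈ L` algebraically dependent with `g`
over `K` is `σ`-algebraic over `K`. -/
theorem sigma_algebraic_of_algebraically_dependent
    {L : Type*} [Field L] (K : Subfield L) (σ : L →+* L)
    (hσK : ∀ k ∈ K, σ k ∈ K)
    (g : L) (hgtrans : Transcendental K g)
    (hglin : ∃ (n : ℕ) (a : Fin (n + 1) → K), (∃ i, a i ≠ 0) ∧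
      ∑ i : Fin (n + 1), (a i : L) * σ^[(i : ℕ)] g = 0)
    (f : L)
    (hdep : ∃ P : MvPolynomial (Fin 2) K, P ≠ 0 ∧ MvPolynomial.aeval ![f, g] P = 0) :
    ∃ P : MvPolynomial ℕ K, P ≠ 0 ∧ MvPolynomial.aeval (fun i => σ^[i] f) P = 0 := by
  classical
  by_contra hcon
  push_neg at hcon
  have halg : AlgebraicIndependent K (fun i : ℕ => σ^[i] f) := by
    rw [algebraicIndependent_iff]
    intro p hp
    by_contra hne
    exact hcon p hne hp
  obtain ⟨P, hP0, hPfg⟩ := hdep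
  obtain ⟨n, a, ⟨i₀, ha0⟩, hrelg⟩ := hglin
  have hg0 : g ≠ 0 := by
    intro h
    exact hgtrans (h ▸ isAlgebraic_zero)
  -- the span of the iterates of g
  obtain ⟨m, hm1, hgY⟩ := aux_gspan σ hσK g hg0 n a i₀ ha0 hrelg
  set Y := Submodule.span K (insert 1 (Set.range fun j : Fin m => σ^[(j:ℕ)] g)) with hYdef
  have h1Y : (1:L) ∈ Y := Submodule.subset_span (Set.mem_insert _ _)
  -- one-variable data from P
  set φ : MvPolynomial (Fin 1) K →+* L := (MvPolynomial.aeval (fun _ : Fin 1 => g)).toRingHom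
    with hφdef
  set p' : Polynomial (MvPolynomial (Fin 1) K) := MvPolynomial.finSuccEquiv K 1 P with hp'def
  have hp'ne : p' ≠ 0 := by
    intro h
    exact hP0 ((EmbeddingLike.map_eq_zero_iff).mp h)
  have hφg : ∀ q : MvPolynomial (Fin 1) K, φ q = 0 → q = 0 := by
    have hAI : AlgebraicIndependent K (fun _ : Fin 1 => g) :=
      (algebraicIndependent_unique_type_iff).mpr hgtrans
    exact fun q hq => hAI.eq_zero_of_aeval_eq_zero q hq
  have heval : Polynomial.eval₂ φ f p' = 0 := by
    rw [← aux_eval2]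
    exact hPfg
  set ρ : ℕ → L := fun j => φ (p'.coeff j) with hρdef
  have hsum : ∑ j ∈ Finset.range (p'.natDegree + 1), ρ j * f ^ j = 0 := by
    rw [← Polynomial.eval₂_eq_sum_range]
    exact heval
  set J : Finset ℕ := (Finset.range (p'.natDegree + 1)).filter (fun j => ρ j ≠ 0) with hJdef
  have hJne : J.Nonempty := by
    have hj₀ : p'.coeff p'.natDegree ≠ 0 := by
      rw [← Polynomial.leadingCoeff]
      exact Polynomial.leadingCoeff_ne_zero.mpr hp'ne
    refine ⟨p'.natDegree, ?_⟩
    rw [hJdef, Finset.mem_filter, Finset.mem_range]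
    constructor
    · omega
    · intro h
      exact hj₀ (hφg _ h)
  set d : ℕ := J.max' hJne with hddef
  have hdJ : d ∈ J := J.max'_mem hJne
  have hρd : ρ d ≠ 0 := (Finset.mem_filter.mp hdJ).2
  have hdle : d ≤ p'.natDegree := by
    have := (Finset.mem_filter.mp hdJ).1
    rw [Finset.mem_range] at this
    omega
  have htrim : ∑ j ∈ Finset.range (d + 1), ρ j * f ^ j = 0 := by
    rw [Finset.sum_subset (Finset.range_subset_range.mpr (by omega : d + 1 ≤ p'.natDegree + 1))]
    · exact hsum
    · intro x hx hnx
      rw [Finset.mem_range] at hx hnx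
      have hxd : ρ x = 0 := by
        by_contra hc
        have : x ∈ J := by
          rw [hJdef, Finset.mem_filter, Finset.mem_range]
          exact ⟨hx, hc⟩
        have := J.le_max' x this
        omega
      rw [hxd, zero_mul]
  have hd1 : 1 ≤ d := by
    by_contra h
    have hd0 : d = 0 := by omega
    rw [hd0] at htrim
    simp at htrim
    exact hρd (by rwa [hd0])
  -- degree bound
  set D : ℕ := (Finset.range (d + 1)).sup (fun j => (p'.coeff j).totalDegree) with hDdef
  set Z : Submodule K L := Y ^ D with hZdef
  have hZcoef : ∀ (i : ℕ), ∀ j ≤ d, σ^[i] (ρ j) ∈ Z := by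
    intro i j hj
    refine aux_coeff_mem σ (aux_iterK σ hσK) g Y h1Y hgY D (p'.coeff j) ?_ i
    exact Finset.le_sup (f := fun j => (p'.coeff j).totalDegree)
      (Finset.mem_range.mpr (by omega : j < d + 1))
  -- shifted relations
  have hrel_i : ∀ i : ℕ, ∑ j ∈ Finset.range (d + 1), σ^[i] (ρ j) * (σ^[i] f) ^ j = 0 := by
    intro i
    have := congrArg (σ ^ i : L →+* L) htrim
    rw [map_sum, map_zero] at this
    rw [← this]
    refine Finset.sum_congr rfl fun j _ => ?_
    rw [map_mul, map_pow]
    simp only [RingHom.coe_pow]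
  -- numerology
  set N : ℕ := ((D + 1) * (m + 1)) ^ m * d ^ (m + 1) with hNdef
  set A : ℕ := D * N * (m + 1) with hAdef
  -- the T modules
  set T : Fin (m+1) → Submodule K L :=
    fun i => Submodule.span K (Set.range fun j : Fin d => (σ^[(i:ℕ)] f) ^ (j:ℕ)) with hTdef
  have hTred : ∀ (i : Fin (m+1)) (e : ℕ), e ≤ N →
      (σ^[(i:ℕ)] (ρ d)) ^ N * (σ^[(i:ℕ)] f) ^ e ∈ Z ^ N * T i := by
    intro i e he
    have hred := aux_red Z d hd1 (σ^[(i:ℕ)] f) (fun j => σ^[(i:ℕ)] (ρ j))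
      (fun j hj => hZcoef (i:ℕ) j hj) (hrel_i (i:ℕ)) e
    have hsplit : (σ^[(i:ℕ)] (ρ d)) ^ N = (σ^[(i:ℕ)] (ρ d)) ^ (N - e) * (σ^[(i:ℕ)] (ρ d)) ^ e := by
      rw [← pow_add]
      congr 1
      omega
    rw [hsplit, mul_assoc]
    have := Submodule.mul_mem_mul
      (Submodule.pow_mem_pow Z (hZcoef (i:ℕ) d le_rfl) (N - e)) hred
    have hps : Z ^ (N - e) * (Z ^ e * T i) = Z ^ N * T i := by
      rw [← mul_assoc, ← pow_add]
      congr 2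
      omega
    rwa [hps] at this
  -- the big constant
  set CC : L := ∏ i : Fin (m+1), (σ^[(i:ℕ)] (ρ d)) ^ N with hCCdef
  have hCC : CC ≠ 0 := by
    rw [hCCdef]
    apply Finset.prod_ne_zero_iff.mpr
    intro i _
    apply pow_ne_zero
    intro h
    have h0 : σ^[(i:ℕ)] (ρ d) = σ^[(i:ℕ)] 0 := by simpa using h
    exact hρd (Function.Injective.iterate σ.injective (i:ℕ) h0)
  -- the index types
  set EN := (Fin (m+1) → Fin (N+1)) with hENdef
  set IN := ((Fin m → Fin (A+1)) × (Fin (m+1) → Fin d)) with hINdef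
  set Φ : IN → L := fun p =>
    (∏ j : Fin m, σ^[(j:ℕ)] g ^ ((p.1 j : ℕ))) * (∏ i : Fin (m+1), σ^[(i:ℕ)] f ^ ((p.2 i : ℕ)))
    with hΦdef
  set ψ : EN → L := fun e => CC * ∏ i : Fin (m+1), σ^[(i:ℕ)] f ^ ((e i : ℕ)) with hψdef
  -- membership
  have hSS : (Z ^ N) ^ (m+1) * ∏ i : Fin (m+1), T i ≤ Submodule.span K (Set.range Φ) := by
    have hZA : (Z ^ N) ^ (m + 1) = Y ^ A := by
      rw [hZdef, ← pow_mul, ← pow_mul, hAdef]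
      congr 1
      ring
    rw [hZA]
    refine le_trans (mul_le_mul'
      (aux_span_pow_le m (fun j : Fin m => σ^[(j:ℕ)] g) A)
      (aux_prod_T_le (m+1) d hd1 (fun i : Fin (m+1) => σ^[(i:ℕ)] f))) ?_
    exact aux_range_mul_le _ _
  have hψmem : ∀ e : EN, ψ e ∈ Submodule.span K (Set.range Φ) := by
    intro e
    apply hSS
    have hprod : ψ e = ∏ i : Fin (m+1), ((σ^[(i:ℕ)] (ρ d)) ^ N * (σ^[(i:ℕ)] f) ^ ((e i : ℕ))) := by
      rw [hψdef, hCCdef, Finset.prod_mul_distrib]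
    rw [hprod]
    have hmem := aux_prod_mem_prod Finset.univ
      (fun i : Fin (m+1) => (σ^[(i:ℕ)] (ρ d)) ^ N * (σ^[(i:ℕ)] f) ^ ((e i : ℕ)))
      (fun i => Z ^ N * T i)
      (fun i _ => hTred i (e i) (Nat.lt_succ_iff.mp (e i).isLt))
    have hps : (∏ i : Fin (m+1), (Z ^ N * T i)) = (Z ^ N) ^ (m+1) * ∏ i : Fin (m+1), T i := by
      rw [Finset.prod_mul_distrib, Finset.prod_const, Finset.card_univ, Fintype.card_fin]
    rwa [hps] at hmem
  -- linear independence
  have hli : LinearIndependent K ψ := by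
    have hxs : AlgebraicIndependent K (fun i : Fin (m+1) => σ^[(i:ℕ)] f) :=
      halg.comp Fin.val Fin.val_injective
    have hinj : Function.Injective
        ⇑(MvPolynomial.aeval (R := K) (fun i : Fin (m+1) => σ^[(i:ℕ)] f)) :=
      algebraicIndependent_iff_injective_aeval.mp hxs
    set ι : EN → (Fin (m+1) →₀ ℕ) :=
      fun e => Finsupp.equivFunOnFinite.symm (fun i => ((e i : ℕ))) with hιdef
    have hιinj : Function.Injective ι := by
      intro e1 e2 h
      have h' : (fun i => ((e1 i : ℕ))) = fun i => ((e2 i : ℕ)) :=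
        Finsupp.equivFunOnFinite.symm.injective h
      funext i
      exact Fin.val_injective (congrFun h' i)
    have li1 : LinearIndependent K
        (fun e : EN => (MvPolynomial.monomial (ι e) (1:K))) := by
      have hb := (MvPolynomial.basisMonomials (Fin (m+1)) K).linearIndependent
      have := hb.comp ι hιinj
      have hco : ((MvPolynomial.basisMonomials (Fin (m+1)) K) ∘ ι)
          = fun e : EN => (MvPolynomial.monomial (ι e) (1:K)) := by
        funext e
        simp [Function.comp, MvPolynomial.coe_basisMonomials]
      rwa [hco] at this
    have li2 := li1.map'
      (MvPolynomial.aeval (R := K) (fun i : Fin (m+1) => σ^[(i:ℕ)] f)).toLinearMap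
      (LinearMap.ker_eq_bot.mpr hinj)
    have heq : ((MvPolynomial.aeval (R := K)
          (fun i : Fin (m+1) => σ^[(i:ℕ)] f)).toLinearMap
            ∘ fun e : EN => (MvPolynomial.monomial (ι e) (1:K)))
        = fun e : EN => ∏ i : Fin (m+1), σ^[(i:ℕ)] f ^ ((e i : ℕ)) := by
      funext e
      show MvPolynomial.aeval _ (MvPolynomial.monomial (ι e) (1:K)) = _
      rw [MvPolynomial.aeval_monomial, map_one, one_mul, Finsupp.prod_pow]
      exact Finset.prod_congr rfl fun i _ => by
        congr 1
    rw [heq] at li2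
    have li3 := li2.map' (LinearMap.mulLeft K CC)
      (LinearMap.ker_eq_bot.mpr (mul_right_injective₀ hCC))
    exact li3
  -- the cardinality contradiction
  have hcard := aux_card_le Φ ψ hli hψmem
  simp only [hENdef, hINdef, Fintype.card_fun, Fintype.card_prod, Fintype.card_fin] at hcard
  -- hcard : (N+1)^(m+1) ≤ (A+1)^m * d^(m+1)
  clear_value N A D d
  have hA1 : A + 1 ≤ (D+1)*(m+1)*(N+1) := by
    rw [hAdef]
    nlinarith
  have h2 : (A+1)^m * d^(m+1) ≤ (((D+1)*(m+1))^m * (N+1)^m) * d^(m+1) := by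
    have := Nat.pow_le_pow_left hA1 m
    rw [mul_pow] at this
    exact Nat.mul_le_mul_right _ this
  have h3 : (((D+1)*(m+1))^m * (N+1)^m) * d^(m+1) = N * (N+1)^m := by
    rw [hNdef]; ring
  have hfin : (N+1)^(m+1) ≤ N * (N+1)^m := by
    calc (N+1)^(m+1) ≤ (A+1)^m * d^(m+1) := hcard
      _ ≤ (((D+1)*(m+1))^m * (N+1)^m) * d^(m+1) := h2
      _ = N * (N+1)^m := h3
  have hexp : (N+1)^(m+1) = N * (N+1)^m + (N+1)^m := by ring
  have hp : 0 < (N+1)^m := Nat.pow_pos (by omega)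
  rw [hexp] at hfin
  linarith
end

section
/- Let L be a field, K a subfield of L, and σ : L → L a ring endomorphism with σ(K) ⊆ K, and let s ≥ 1 be an integer. Then f ∈ L is σ-algebraic over K if and only if f is σ^s-algebraic over K, i.e., the family (σ^i(f))_{i∈ℕ} is algebraically dependent over K if and only if the family (σ^{si}(f))_{i∈ℕ} is algebraically dependent over K. -/
open scoped BigOperators


open MvPolynomial

section SA
variable {L : Type*} [Field L]

/-- Transfer algebraicity along a ring hom `φ` compatible with a field endomorphism `τ`. -/
theorem sa_isAlg_transfer {R R' : Type*} [CommRing R] [CommRing R'] [Algebra R L] [Algebra R' L]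
    (φ : R →+* R') (τ : L →+* L)
    (hc : (algebraMap R' L).comp φ = τ.comp (algebraMap R L))
    (hinj : Function.Injective (algebraMap R L)) {z : L}
    (h : IsAlgebraic R z) : IsAlgebraic R' (τ z) := by
  obtain ⟨p, hp, hz⟩ := h
  have hφ : Function.Injective φ := by
    have h2 : Function.Injective ((algebraMap R' L).comp φ) := by
      rw [hc]; exact τ.injective.comp hinj
    exact Function.Injective.of_comp h2
  refine ⟨p.map φ, fun h0 => hp (Polynomial.map_injective φ hφ (by simpa using h0)), ?_⟩
  rw [Polynomial.aeval_def, Polynomial.eval₂_map, hc]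
  rw [Polynomial.aeval_def] at hz
  rw [← Polynomial.hom_eval₂, hz, map_zero]

theorem sa_algInd_transfer {ι R R' : Type*} [CommRing R] [CommRing R'] [Algebra R L] [Algebra R' L]
    (φ : R →+* R') (hc : (algebraMap R' L).comp φ = algebraMap R L)
    (hinj : Function.Injective (algebraMap R L)) {x : ι → L}
    (h : AlgebraicIndependent R' x) : AlgebraicIndependent R x := by
  rw [algebraicIndependent_iff] at h ⊢
  intro p hp
  have hφ : Function.Injective φ := by
    have h2 : Function.Injective ((algebraMap R' L).comp φ) := by rw [hc]; exact hinj
    exact Function.Injective.of_comp h2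
  have : MvPolynomial.map φ p = 0 := by
    apply h
    rw [MvPolynomial.aeval_def, MvPolynomial.eval₂_map, hc, ← MvPolynomial.aeval_def, hp]
  have := congrArg (MvPolynomial.map φ) (rfl : p = p)
  exact MvPolynomial.map_injective φ hφ (by simpa using ‹MvPolynomial.map φ p = 0›)

/-- The subfield generated by a subfield `E` and a set `S`. -/
noncomputable def MSF (E : Subfield L) (S : Set L) : Subfield L :=
  (IntermediateField.adjoin (↥E) S).toSubfield

theorem subset_MSF (E : Subfield L) (S : Set L) : S ⊆ ↑(MSF E S) := fun x hx =>
  (IntermediateField.mem_toSubfield _ _).2 (IntermediateField.subset_adjoin _ _ hx)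

theorem le_MSF (E : Subfield L) (S : Set L) : E ≤ MSF E S := by
  intro x hx
  refine (IntermediateField.mem_toSubfield _ _).2 ?_
  have := (IntermediateField.adjoin (↥E) S).algebraMap_mem ⟨x, hx⟩
  exact this

theorem MSF_le (E : Subfield L) (S : Set L) {M : Subfield L} (hE : E ≤ M) (hS : S ⊆ ↑M) :
    MSF E S ≤ M := by
  intro x hx
  have h2 := (IntermediateField.adjoin_le_iff
    (T := Subfield.toIntermediateField (K := ↥E) M (fun e => hE e.2))).2 hS
  exact h2 ((IntermediateField.mem_toSubfield _ _).1 hx)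

theorem MSF_frac (E : Subfield L) (S : Set L) {c : L} (hc : c ∈ MSF E S) :
    ∃ r ∈ Algebra.adjoin (↥E) S, ∃ t ∈ Algebra.adjoin (↥E) S, c = r / t := by
  obtain ⟨r, s, h⟩ := (IntermediateField.mem_adjoin_iff (↥E) c).1
    ((IntermediateField.mem_toSubfield _ _).1 hc)
  have hadj : Algebra.adjoin (↥E) S = (MvPolynomial.aeval (Subtype.val : S → L)).range := by
    conv_lhs => rw [← Subtype.range_coe (s := S)]
    rw [Algebra.adjoin_range_eq_range_aeval]
  refine ⟨_, ?_, _, ?_, h⟩ <;> · rw [hadj]; exact ⟨_, rfl⟩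

theorem adjoin_le_MSF (E : Subfield L) (S : Set L) :
    ∀ x ∈ Algebra.adjoin (↥E) S, x ∈ MSF E S := fun x hx =>
  (IntermediateField.mem_toSubfield _ _).2 (IntermediateField.algebra_adjoin_le_adjoin (↥E) S hx)

-- sanity rfl checks
example (M : Subfield L) : algebraMap (↥M) L = M.subtype := rfl
example (M M' : Subfield L) (h : M ≤ M') :
    (algebraMap (↥M') L).comp ((M.subtype).codRestrict M'.toSubsemiring (fun x => h x.2)) =
      algebraMap (↥M) L := rfl
example (X : IntermediateField (↥(⊥ : Subfield L)) L) : algebraMap (↥X) L = X.toSubfield.subtype := rfl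

end SA
section SA2
variable {L : Type*} [Field L]

/-- Relative algebraic closure predicate. -/
def clo (E : Subfield L) (S : Set L) : Set L := {z | IsAlgebraic (↥(MSF E S)) z}

theorem sa_isAlg_mono {M M' : Subfield L} (hle : M ≤ M') {z : L}
    (h : IsAlgebraic (↥M) z) : IsAlgebraic (↥M') z :=
  sa_isAlg_transfer ((M.subtype).codRestrict M' (fun x => hle x.2))
    (RingHom.id L) rfl Subtype.val_injective h

theorem subset_clo (E : Subfield L) (S : Set L) : S ⊆ clo E S := by
  intro z hz
  have hmem : z ∈ MSF E S := subset_MSF E S hz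
  have := isAlgebraic_algebraMap (R := ↥(MSF E S)) (A := L) ⟨z, hmem⟩
  exact this

theorem mem_clo_of_mem (E : Subfield L) (S : Set L) {z : L} (hz : z ∈ MSF E S) : z ∈ clo E S := by
  have := isAlgebraic_algebraMap (R := ↥(MSF E S)) (A := L) ⟨z, hz⟩
  exact this

theorem clo_mono {E E' : Subfield L} {S S' : Set L} (hE : E ≤ E') (hS : S ⊆ S') :
    clo E S ⊆ clo E' S' := fun _ hz =>
  sa_isAlg_mono (MSF_le _ _ (hE.trans (le_MSF _ _)) (fun x hx => subset_MSF E' S' (hS hx))) hz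

theorem MSF_empty_le (E : Subfield L) : MSF E (∅ : Set L) ≤ E := by
  intro x hx
  have h1 : x ∈ (⊥ : IntermediateField (↥E) L) := by
    rw [← IntermediateField.adjoin_empty (↥E) L]
    exact (IntermediateField.mem_toSubfield _ _).1 hx
  obtain ⟨y, hy⟩ := IntermediateField.mem_bot.1 h1
  rw [← hy]; exact y.2

theorem clo_empty {E : Subfield L} {z : L} (h : z ∈ clo E (∅ : Set L)) : IsAlgebraic (↥E) z :=
  sa_isAlg_mono (MSF_empty_le E) h

/-- Clearing denominators: independence over a subalgebra implies independence over
a subfield contained in its "fraction field". -/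
theorem sa_algInd_up {F : Type*} [Field F] [Algebra F L] {ι : Type*} (A : Subalgebra F L)
    (M : Subfield L) (hAM : ∀ a ∈ A, a ∈ M)
    (hfr : ∀ c ∈ M, ∃ r ∈ A, ∃ t ∈ A, c = r / t)
    {x : ι → L} (h : AlgebraicIndependent (↥A) x) : AlgebraicIndependent (↥M) x := by
  classical
  rw [algebraicIndependent_iff] at h ⊢
  intro p hp
  by_contra hp0
  have key : ∀ c : (↥M), ∃ r t : L, r ∈ A ∧ t ∈ A ∧ t ≠ 0 ∧ (c : L) * t = r := by
    intro c
    obtain ⟨r, hr, t, ht, hc⟩ := hfr c c.2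
    by_cases h0 : t = 0
    · exact ⟨0, 1, A.zero_mem, A.one_mem, one_ne_zero, by rw [hc, h0, div_zero, zero_mul]⟩
    · exact ⟨r, t, hr, ht, h0, by rw [hc, div_mul_cancel₀ _ h0]⟩
  choose num den hnum hden hdz hmul using key
  have cf : (ι →₀ ℕ) → ↥M := fun m => MvPolynomial.coeff m p
  set d : L := ∏ m ∈ p.support, den (MvPolynomial.coeff m p) with hd
  have hdA : d ∈ A := Subalgebra.prod_mem A (fun m _ => hden _)
  have hd0 : d ≠ 0 := Finset.prod_ne_zero_iff.2 fun m _ => hdz _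
  have hcd : ∀ m ∈ p.support, ((MvPolynomial.coeff m p : ↥M) * d : L) ∈ A := by
    intro m hm
    have h1 : den (MvPolynomial.coeff m p) *
        (∏ m' ∈ p.support.erase m, den (MvPolynomial.coeff m' p)) = d := by
      rw [hd]; exact Finset.mul_prod_erase p.support (fun m' => den (MvPolynomial.coeff m' p)) hm
    have h2 : ((MvPolynomial.coeff m p : ↥M) : L) * d
        = num (MvPolynomial.coeff m p) * ∏ m' ∈ p.support.erase m, den (MvPolynomial.coeff m' p) := by
      rw [← h1, ← mul_assoc, hmul]
    rw [h2]
    exact A.mul_mem (hnum _) (A.prod_mem (fun m' _ => hden _))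
  set q : MvPolynomial ι (↥A) :=
    ∑ m ∈ p.support.attach,
      MvPolynomial.monomial m.1 (⟨((MvPolynomial.coeff m.1 p : ↥M) : L) * d, hcd m.1 m.2⟩ : ↥A) with hq
  have hqz : MvPolynomial.aeval x q = 0 := by
    have hqev : MvPolynomial.aeval x q
        = ∑ m ∈ p.support.attach, (((MvPolynomial.coeff m.1 p : ↥M) : L) * d)
            * (m.1.prod fun i k => x i ^ k) := by
      rw [hq, map_sum]
      refine Finset.sum_congr rfl fun m _ => ?_
      rw [MvPolynomial.aeval_monomial]
      rfl
    have hpev : MvPolynomial.aeval x p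
        = ∑ m ∈ p.support.attach, ((MvPolynomial.coeff m.1 p : ↥M) : L)
            * (m.1.prod fun i k => x i ^ k) := by
      conv_lhs => rw [← MvPolynomial.support_sum_monomial_coeff p]
      rw [map_sum, ← Finset.sum_attach p.support
        (fun m => MvPolynomial.aeval x (MvPolynomial.monomial m (MvPolynomial.coeff m p)))]
      refine Finset.sum_congr rfl fun m _ => ?_
      rw [MvPolynomial.aeval_monomial]
      rfl
    rw [hqev]
    have : ∀ m ∈ p.support.attach,
        (((MvPolynomial.coeff m.1 p : ↥M) : L) * d) * (m.1.prod fun i k => x i ^ k)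
        = d * (((MvPolynomial.coeff m.1 p : ↥M) : L) * (m.1.prod fun i k => x i ^ k)) := by
      intro m _; ring
    rw [Finset.sum_congr rfl this, ← Finset.mul_sum, ← hpev, hp, mul_zero]
  have hq0 : q = 0 := h q hqz
  obtain ⟨m₀, hm₀⟩ := MvPolynomial.support_nonempty.2 hp0
  have hco : MvPolynomial.coeff m₀ q
      = (⟨((MvPolynomial.coeff m₀ p : ↥M) : L) * d, hcd m₀ hm₀⟩ : ↥A) := by
    rw [hq, MvPolynomial.coeff_sum]
    rw [Finset.sum_eq_single (⟨m₀, hm₀⟩ : {y // y ∈ p.support})]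
    · rw [MvPolynomial.coeff_monomial, if_pos rfl]
    · intro b _ hb
      rw [MvPolynomial.coeff_monomial, if_neg]
      intro hbe
      exact hb (Subtype.ext hbe)
    · intro hmem; exact absurd (Finset.mem_attach _ _) hmem
  rw [hq0] at hco
  have : ((MvPolynomial.coeff m₀ p : ↥M) : L) * d = 0 := by
    have := congrArg (Subtype.val) hco.symm
    simpa using this
  rcases mul_eq_zero.1 this with h1 | h1
  · exact (MvPolynomial.mem_support_iff.1 hm₀) (by exact_mod_cast Subtype.ext h1)
  · exact hd0 h1

theorem sa_isAlg_A_to_M {F : Type*} [Field F] [Algebra F L] (A : Subalgebra F L) (M : Subfield L)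
    (hAM : ∀ a ∈ A, a ∈ M) {z : L} (h : IsAlgebraic (↥A) z) : IsAlgebraic (↥M) z :=
  sa_isAlg_transfer (RingHom.codRestrict A.val.toRingHom M (fun a => hAM a a.2))
    (RingHom.id L) rfl Subtype.val_injective h

theorem sa_isAlg_M_to_A {E : Subfield L} {S : Set L} {z : L}
    (h : IsAlgebraic (↥(MSF E S)) z) : IsAlgebraic (↥(Algebra.adjoin (↥E) S)) z := by
  by_contra htr
  have h1 : AlgebraicIndependent (↥(Algebra.adjoin (↥E) S)) (fun _ : Unit => z) :=
    algebraicIndependent_unique_type_iff.2 htr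
  have h2 := sa_algInd_up _ (MSF E S) (adjoin_le_MSF E S) (fun c hc => MSF_frac E S hc) h1
  exact (algebraicIndependent_unique_type_iff.1 h2) h

theorem sa_clo_shift {E : Subfield L} {S : Set L} (σ : L →+* L) (hσ : ∀ x ∈ E, σ x ∈ E)
    {z : L} (h : z ∈ clo E S) : σ z ∈ clo E (σ '' S) := by
  have hle : MSF E S ≤ (MSF E (σ '' S)).comap σ :=
    MSF_le _ _ (fun x hx => le_MSF _ _ (hσ x hx))
      (fun x hx => subset_MSF _ _ ⟨x, hx, rfl⟩)
  exact sa_isAlg_transfer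
    ((σ.comp (MSF E S).subtype).codRestrict (MSF E (σ '' S)) (fun c => hle c.2))
    σ rfl Subtype.val_injective h

theorem sa_clo_shift_iter {E : Subfield L} {S : Set L} (σ : L →+* L) (hσ : ∀ x ∈ E, σ x ∈ E)
    {z : L} (h : z ∈ clo E S) (k : ℕ) : (⇑σ)^[k] z ∈ clo E ((⇑σ)^[k] '' S) := by
  induction k with
  | zero => simpa using h
  | succ k ih =>
    have h1 := sa_clo_shift σ hσ ih
    rw [Function.iterate_succ_apply']
    have him : (⇑σ)^[k + 1] '' S = σ '' ((⇑σ)^[k] '' S) := by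
      rw [Function.iterate_succ', Set.image_comp]
    rw [him]
    exact h1

set_option maxHeartbeats 1000000 in
set_option synthInstance.maxHeartbeats 200000 in
theorem clo_trans {E : Subfield L} {S T : Set L} (hT : ∀ t ∈ T, t ∈ clo E S) :
    clo E (S ∪ T) ⊆ clo E S := by
  intro z hz
  have h1 : IsAlgebraic (↥(MSF (MSF E S) T)) z := by
    refine sa_isAlg_mono (MSF_le _ _ ((le_MSF E S).trans (le_MSF (MSF E S) T)) ?_) hz
    exact Set.union_subset (fun s hs => le_MSF (MSF E S) T (subset_MSF E S hs))
      (subset_MSF (MSF E S) T)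
  -- bridge to IntermediateField
  set M1 := MSF E S
  set X : IntermediateField (↥M1) L := IntermediateField.adjoin (↥M1) T with hX
  have h2 : IsAlgebraic (↥X) z :=
    sa_isAlg_transfer (R := ↥(MSF M1 T))
      (RingHom.codRestrict ((MSF M1 T).subtype) X
        (fun c => (IntermediateField.mem_toSubfield _ _).1 c.2))
      (RingHom.id L) (RingHom.ext fun c => rfl) Subtype.val_injective h1
  haveI hXalg : Algebra.IsAlgebraic (↥M1) (↥X) :=
    (IntermediateField.isAlgebraic_adjoin_iff_isAlgebraic (↥M1) L).2 hT
  haveI : Algebra.IsIntegral (↥M1) (↥X) := Algebra.isAlgebraic_iff_isIntegral.1 hXalg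
  have h3 : IsIntegral (↥X) z := (isAlgebraic_iff_isIntegral).1 h2
  have h4 : IsIntegral (↥M1) z := isIntegral_trans z h3
  exact h4.isAlgebraic

end SA2
section SA3
set_option maxHeartbeats 1000000
set_option synthInstance.maxHeartbeats 400000
variable {L : Type*} [Field L]

theorem sa_algInd_sum {F : Type*} [Field F] [Algebra F L] {ι ι' : Type*} {x : ι → L} {y : ι' → L}
    (h : AlgebraicIndependent F (Sum.elim x y)) :
    AlgebraicIndependent (↥(Algebra.adjoin F (Set.range y))) x := by
  have hy : AlgebraicIndependent F y := by
    have h2 := h.comp Sum.inr Sum.inr_injective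
    rwa [Sum.elim_comp_inr] at h2
  set φ : MvPolynomial (ι ⊕ ι') F →ₐ[F] MvPolynomial ι (↥(Algebra.adjoin F (Set.range y))) :=
    MvPolynomial.aeval
      (Sum.elim MvPolynomial.X (fun j => MvPolynomial.C (hy.aevalEquiv (MvPolynomial.X j)))) with hφ
  have hsur : Function.Surjective φ := by
    intro z
    induction z using MvPolynomial.induction_on with
    | C a =>
      refine ⟨MvPolynomial.rename Sum.inr (hy.aevalEquiv.symm a), ?_⟩
      have hψ : (φ.comp (MvPolynomial.rename (R := F) Sum.inr))
          = (IsScalarTower.toAlgHom F (↥(Algebra.adjoin F (Set.range y))) (MvPolynomial ι (↥(Algebra.adjoin F (Set.range y))))).comp hy.aevalEquiv.toAlgHom := by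
        apply MvPolynomial.algHom_ext
        intro j
        rw [AlgHom.comp_apply, AlgHom.comp_apply, MvPolynomial.rename_X, hφ, MvPolynomial.aeval_X]
        rw [IsScalarTower.toAlgHom_apply, MvPolynomial.algebraMap_eq]
        rfl
      have := congrArg (fun ψ => ψ (hy.aevalEquiv.symm a)) hψ
      simp only [AlgHom.comp_apply] at this
      rw [this]
      simp
    | add p q hp hq =>
      obtain ⟨P, rfl⟩ := hp; obtain ⟨Q, rfl⟩ := hq
      exact ⟨P + Q, map_add _ _ _⟩
    | mul_X p i hp =>
      obtain ⟨P, rfl⟩ := hp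
      refine ⟨P * MvPolynomial.X (Sum.inl i), ?_⟩
      rw [map_mul]
      congr 1
      simp [hφ]
  have hcomp : ∀ p, MvPolynomial.aeval (R := ↥(Algebra.adjoin F (Set.range y))) x (φ p)
      = MvPolynomial.aeval (R := F) (Sum.elim x y) p := by
    have hring : ((MvPolynomial.aeval (R := ↥(Algebra.adjoin F (Set.range y))) x : MvPolynomial ι (↥(Algebra.adjoin F (Set.range y))) →ₐ[↥(Algebra.adjoin F (Set.range y))] L) :
          MvPolynomial ι (↥(Algebra.adjoin F (Set.range y))) →+* L).comp (φ : MvPolynomial (ι ⊕ ι') F →+* MvPolynomial ι (↥(Algebra.adjoin F (Set.range y))))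
        = ((MvPolynomial.aeval (R := F) (Sum.elim x y) :
            MvPolynomial (ι ⊕ ι') F →ₐ[F] L) : MvPolynomial (ι ⊕ ι') F →+* L) := by
      apply MvPolynomial.ringHom_ext
      · intro c
        simp [hφ, MvPolynomial.algebraMap_eq, ← IsScalarTower.algebraMap_apply]
      · rintro (i | j)
        · simp [hφ]
        · simp [hφ, AlgebraicIndependent.algebraMap_aevalEquiv]
    intro p
    exact congrFun (congrArg (fun (f : MvPolynomial (ι ⊕ ι') F →+* L) => (f : _ → L)) hring) p
  rw [algebraicIndependent_iff_injective_aeval] at h ⊢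
  intro u v huv
  obtain ⟨u', rfl⟩ := hsur u
  obtain ⟨v', rfl⟩ := hsur v
  have : MvPolynomial.aeval (R := F) (Sum.elim x y) u' = MvPolynomial.aeval (R := F) (Sum.elim x y) v' := by
    rw [← hcomp, ← hcomp]; exact huv
  rw [h this]

theorem clo_exchange {E : Subfield L} {x y : L}
    (hyT : Transcendental (↥E) y) (h : y ∈ clo E {x}) : x ∈ clo E {y} := by
  by_contra hx
  have hx' : Transcendental (↥(Algebra.adjoin (↥E) {y})) x := by
    intro halg
    exact hx (sa_isAlg_A_to_M _ _ (adjoin_le_MSF E {y}) halg)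
  have h1 : AlgebraicIndependent (↥E) (fun _ : Unit => y) :=
    algebraicIndependent_unique_type_iff.2 hyT
  have hpair : AlgebraicIndependent (↥E) (fun o : Option Unit => o.elim x (fun _ => y)) := by
    rw [h1.option_iff_transcendental]
    rwa [Set.range_const]
  let e : Option Unit ≃ Option Unit :=
    ⟨fun o => o.elim (some ()) (fun _ => none), fun o => o.elim (some ()) (fun _ => none),
      by rintro (_ | _) <;> rfl, by rintro (_ | _) <;> rfl⟩
  have hpair' : AlgebraicIndependent (↥E) (fun o : Option Unit => o.elim y (fun _ => x)) := by
    have h2 := (algebraicIndependent_equiv e).2 hpair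
    have hfe : ((fun o : Option Unit => o.elim x (fun _ => y)) ∘ e)
        = (fun o : Option Unit => o.elim y (fun _ => x)) := by
      funext o; rcases o with _ | u <;> simp [e]
    rwa [hfe] at h2
  have h2 : AlgebraicIndependent (↥E) (fun _ : Unit => x) :=
    hpair'.comp (fun u : Unit => some u) (fun a b _ => rfl)
  have h3 : Transcendental (↥(Algebra.adjoin (↥E) (Set.range (fun _ : Unit => x)))) y := by
    rw [← h2.option_iff_transcendental]
    exact hpair'
  rw [Set.range_const] at h3
  exact h3 (sa_isAlg_M_to_A h)

theorem sa_baseChange {E : Subfield L} {m : ℕ} {b : Fin (m + 1) → L}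
    (h : AlgebraicIndependent (↥E) b) :
    AlgebraicIndependent (↥(MSF E {b 0})) (b ∘ Fin.succ) := by
  let e : Fin (m + 1) ≃ (Fin m ⊕ Unit) :=
    { toFun := fun i => Fin.cases (Sum.inr ()) (fun j => Sum.inl j) i
      invFun := Sum.elim (fun j => j.succ) (fun _ => 0)
      left_inv := by
        intro i
        induction i using Fin.cases <;> simp
      right_inv := by rintro (j | u) <;> simp }
  have hsum : AlgebraicIndependent (↥E) (Sum.elim (b ∘ Fin.succ) (fun _ : Unit => b 0)) := by
    have hco : (Sum.elim (b ∘ Fin.succ) (fun _ : Unit => b 0)) ∘ e = b := by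
      funext i
      induction i using Fin.cases <;> simp [e]
    exact (algebraicIndependent_equiv e).1 (by rwa [hco])
  have hA := sa_algInd_sum hsum
  rw [Set.range_const] at hA
  exact sa_algInd_up _ _ (adjoin_le_MSF E {b 0}) (fun c hc => MSF_frac E {b 0} hc) hA

end SA3
section SA4
set_option maxHeartbeats 1000000
set_option synthInstance.maxHeartbeats 400000
variable {L : Type*} [Field L]

theorem sa_steinitz : ∀ (n : ℕ) (E : Subfield L) (a : Fin n → L) (b : Fin (n + 1) → L),
    (∀ i, b i ∈ clo E (Set.range a)) → AlgebraicIndependent (↥E) b → False := by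
  intro n
  induction n with
  | zero =>
    intro E a b hb hind
    have h0 : b 0 ∈ clo E (Set.range a) := hb 0
    have hra : Set.range a = (∅ : Set L) := by
      rw [Set.range_eq_empty_iff]
      exact ⟨fun i => absurd i.2 (by omega)⟩
    rw [hra] at h0
    exact hind.transcendental 0 (clo_empty h0)
  | succ n IH =>
    intro E a b hb hind
    classical
    have htr0 : Transcendental (↥E) (b 0) := hind.transcendental 0
    have hPuniv : b 0 ∈ clo E (a '' ↑(Finset.univ : Finset (Fin (n + 1)))) := by
      have him : (a '' ↑(Finset.univ : Finset (Fin (n + 1)))) = Set.range a := by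
        simp [Set.image_univ]
      rw [him]; exact hb 0
    have hexT : ∃ k : ℕ, ∃ T : Finset (Fin (n + 1)), T.card = k ∧ b 0 ∈ clo E (a '' ↑T) :=
      ⟨Finset.univ.card, Finset.univ, rfl, hPuniv⟩
    obtain ⟨T, hTcard, hT⟩ := Nat.find_spec hexT
    have hTne : T.Nonempty := by
      rcases T.eq_empty_or_nonempty with rfl | hne
      · exfalso
        have : b 0 ∈ clo E (∅ : Set L) := by simpa using hT
        exact htr0 (clo_empty this)
      · exact hne
    obtain ⟨j, hj⟩ := hTne
    set S' : Set L := a '' ↑(T.erase j) with hS'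
    have hmin' : b 0 ∉ clo E S' := by
      intro hmem
      have hcard := Finset.card_erase_lt_of_mem hj
      exact Nat.find_min hexT (by omega) ⟨T.erase j, rfl, hmem⟩
    -- a '' T = S' ∪ {a j}
    have haT : (a '' ↑T : Set L) = S' ∪ {a j} := by
      conv_lhs => rw [← Finset.insert_erase hj]
      rw [Finset.coe_insert, Set.image_insert_eq, hS']
      rw [Set.union_comm]
      rfl
    have key : MSF E (S' ∪ {a j}) = MSF (MSF E S') {a j} := by
      apply le_antisymm
      · refine MSF_le _ _ ((le_MSF E S').trans (le_MSF _ _)) ?_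
        exact Set.union_subset
          (fun t ht => le_MSF (MSF E S') {a j} (subset_MSF E S' ht))
          (subset_MSF _ _)
      · refine MSF_le _ _ (MSF_le _ _ (le_MSF _ _) ?_) ?_
        · exact fun t ht => subset_MSF _ _ (Set.mem_union_left _ ht)
        · exact fun t ht => subset_MSF _ _ (Set.mem_union_right _ ht)
    have hcl : b 0 ∈ clo (MSF E S') {a j} := by
      have h1 : b 0 ∈ clo E (S' ∪ {a j}) := by rwa [haT] at hT
      show IsAlgebraic (↥(MSF (MSF E S') {a j})) (b 0)
      rw [← key]
      exact h1
    have hex : a j ∈ clo (MSF E S') {b 0} := clo_exchange hmin' hcl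
    set F1 : Subfield L := MSF E {b 0} with hF1
    set a' : Fin n → L := a ∘ j.succAbove with ha'
    have hEF1 : E ≤ F1 := le_MSF E {b 0}
    have hb0F1 : b 0 ∈ F1 := subset_MSF E {b 0} rfl
    have hra' : Set.range a' = a '' {k | k ≠ j} := by
      rw [ha', Set.range_comp, Fin.range_succAbove]
      rfl
    have hS'a' : S' ⊆ Set.range a' := by
      rw [hS', hra']
      intro t ht
      obtain ⟨k, hk, rfl⟩ := ht
      exact ⟨k, Finset.ne_of_mem_erase (by exact_mod_cast hk), rfl⟩
    have hrange : ∀ k, a k ∈ clo F1 (Set.range a') := by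
      intro k
      by_cases hk : k = j
      · subst hk
        refine sa_isAlg_mono (M := MSF (MSF E S') {b 0}) ?_ hex
        refine MSF_le _ _ (MSF_le _ _ (hEF1.trans (le_MSF _ _)) ?_) ?_
        · exact fun t ht => subset_MSF _ _ (hS'a' ht)
        · intro t ht
          rcases ht with rfl
          exact le_MSF F1 (Set.range a') hb0F1
      · refine subset_clo _ _ ?_
        rw [hra']
        exact ⟨k, hk, rfl⟩
    have hb'mem : ∀ i, (b ∘ Fin.succ) i ∈ clo F1 (Set.range a') := by
      intro i
      have h1 : b i.succ ∈ clo E (Set.range a) := hb _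
      have h2 : b i.succ ∈ clo F1 (Set.range a' ∪ Set.range a) :=
        clo_mono hEF1 Set.subset_union_right h1
      exact clo_trans (fun t ht => by obtain ⟨k, rfl⟩ := ht; exact hrange k) h2
    exact IH F1 a' (b ∘ Fin.succ) hb'mem (sa_baseChange hind)

end SA4
set_option maxHeartbeats 1000000 in
set_option synthInstance.maxHeartbeats 400000 in
/-- `f` is `σ`-algebraic over `K` if and only if `f` is `σ^s`-algebraic
over `K`, for any integer `s ≥ 1`. -/
theorem sigma_algebraic_iff_sigma_pow_algebraic
    {L : Type*} [Field L] (K : Subfield L) (σ : L →+* L)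
    (hσK : ∀ k ∈ K, σ k ∈ K)
    (s : ℕ) (hs : 1 ≤ s) (f : L) :
    (∃ P : MvPolynomial ℕ K, P ≠ 0 ∧
        MvPolynomial.aeval (fun i => σ^[i] f) P = 0) ↔
      (∃ P : MvPolynomial ℕ K, P ≠ 0 ∧
        MvPolynomial.aeval (fun i => σ^[s * i] f) P = 0) := by
  classical
  set g : ℕ → L := fun i => σ^[i] f with hg
  constructor
  · rintro ⟨P, hP0, hPz⟩
    by_contra hno
    have hInd : AlgebraicIndependent (↥K) (fun i : ℕ => g (s * i)) := by
      rw [algebraicIndependent_iff]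
      intro p hp
      by_contra h0
      exact hno ⟨p, h0, hp⟩
    obtain ⟨k, u, hu, q, rfl⟩ := MvPolynomial.exists_fin_rename P
    have hq0 : q ≠ 0 := fun h => hP0 (by rw [h, map_zero])
    have hqz : MvPolynomial.aeval (g ∘ u) q = 0 := by
      rwa [MvPolynomial.aeval_rename] at hPz
    set N : ℕ := (Finset.univ.sup u) + 1 with hN
    have huN : ∀ i, u i < N := fun i => Nat.lt_succ_of_le (Finset.le_sup (Finset.mem_univ i))
    have hdepN : ¬ AlgebraicIndependent (↥K) (fun i : Fin N => g ↑i) := by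
      intro h
      have h2 := h.comp (fun i : Fin k => (⟨u i, huN i⟩ : Fin N))
        (fun i i' hii => hu (by simpa using congrArg Fin.val hii))
      rw [algebraicIndependent_iff] at h2
      exact hq0 (h2 q hqz)
    have hexN : ∃ N, ¬ AlgebraicIndependent (↥K) (fun i : Fin N => g ↑i) := ⟨N, hdepN⟩
    have hdep_n := Nat.find_spec hexN
    have hn0 : Nat.find hexN ≠ 0 := by
      intro h0
      apply hdep_n
      haveI : IsEmpty (Fin (Nat.find hexN)) := by rw [h0]; infer_instance
      exact algebraicIndependent_empty_type
    obtain ⟨n', he⟩ : ∃ n', Nat.find hexN = n' + 1 := ⟨Nat.find hexN - 1, by omega⟩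
    rw [he] at hdep_n
    have hind : AlgebraicIndependent (↥K) (fun i : Fin n' => g ↑i) :=
      not_not.1 (Nat.find_min hexN (by omega))
    have hopt : IsAlgebraic (↥(Algebra.adjoin (↥K) (Set.range (fun i : Fin n' => g ↑i)))) (g n') := by
      by_contra htr
      apply hdep_n
      have hpair := (hind.option_iff_transcendental (g n')).2 htr
      have h3 := (algebraicIndependent_equiv finSuccEquivLast).2 hpair
      have hco : ((fun o : Option (Fin n') => o.elim (g n') (fun i : Fin n' => g ↑i))
          ∘ finSuccEquivLast) = (fun i : Fin (n' + 1) => g ↑i) := by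
        funext i
        induction i using Fin.lastCases with
        | last => simp
        | cast i => simp
      rwa [hco] at h3
    set W : Set L := Set.range (fun i : Fin n' => g ↑i) with hW
    have hWclo : g n' ∈ clo K W := sa_isAlg_A_to_M _ _ (adjoin_le_MSF K W) hopt
    have hall : ∀ j, g j ∈ clo K W := by
      intro j
      induction j using Nat.strong_induction_on with
      | _ j IHj =>
        by_cases hjlt : j < n'
        · exact subset_clo _ _ ⟨⟨j, hjlt⟩, rfl⟩
        · set k := j - n' with hkdef
          have hk : j = k + n' := by omega
          have hgj : g j = (⇑σ)^[k] (g n') := by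
            show σ^[j] f = (⇑σ)^[k] (σ^[n'] f)
            rw [← Function.iterate_add_apply, ← hk]
          have hshift : (⇑σ)^[k] (g n') ∈ clo K ((⇑σ)^[k] '' W) :=
            sa_clo_shift_iter σ hσK hWclo k
          have hwin : ∀ t ∈ (⇑σ)^[k] '' W, t ∈ clo K W := by
            rintro t ⟨w, ⟨i, rfl⟩, rfl⟩
            have h1 : (⇑σ)^[k] (g ↑i) = g (k + ↑i) := by
              show (⇑σ)^[k] (σ^[↑i] f) = σ^[k + ↑i] f
              rw [Function.iterate_add_apply]
            rw [h1]
            refine IHj (k + ↑i) ?_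
            have := i.isLt
            omega
          have hun : g j ∈ clo K (W ∪ (⇑σ)^[k] '' W) := by
            rw [hgj]
            exact clo_mono le_rfl Set.subset_union_right hshift
          exact clo_trans hwin hun
    have hbind : AlgebraicIndependent (↥K) (fun i : Fin (n' + 1) => g (s * ↑i)) :=
      hInd.comp (fun i : Fin (n' + 1) => (↑i : ℕ)) Fin.val_injective
    exact sa_steinitz n' K (fun i : Fin n' => g ↑i) (fun i : Fin (n' + 1) => g (s * ↑i))
      (fun i => hall (s * ↑i)) hbind
  · rintro ⟨P, hP0, hPz⟩
    have hinj : Function.Injective (fun i : ℕ => s * i) :=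
      fun i i' hii => Nat.eq_of_mul_eq_mul_left (by omega) hii
    refine ⟨MvPolynomial.rename (fun i => s * i) P, ?_, ?_⟩
    · intro h0
      refine hP0 (MvPolynomial.rename_injective _ hinj ?_)
      rw [h0, map_zero]
    · rw [MvPolynomial.aeval_rename]
      exact hPz
end

section
/- Let K be a field with a ring endomorphism φ_K, let C = {c ∈ K : φ_K(c) = c} be its fixed subfield, let R be a commutative K-algebra equipped with a ring endomorphism φ_R satisfying φ_R(algebraMap(k)) = algebraMap(φ_K(k)) for all k ∈ K, and let A be an invertible n×n matrix over K. Let B be a commutative C-algebra, and equip R ⊗_C B with the ring endomorphism Φ = φ_R ⊗ id_B. Then the set of vectors y ∈ (R ⊗_C B)^n satisfying Φ(y_i) = Σ_j (A_{ij} ⊗ 1)·y_j for all i equals the B-submodule of (R ⊗_C B)^n spanned by the vectors (z_1 ⊗ 1, …, z_n ⊗ 1) where z ∈ R^n ranges over the solutions of φ_R(z_i) = Σ_j A_{ij}·z_j for all i (with A_{ij} acting via the algebra map K → R). -/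
open scoped TensorProduct BigOperators

attribute [local instance] Algebra.TensorProduct.rightAlgebra

set_option maxHeartbeats 2000000 in
set_option synthInstance.maxHeartbeats 1000000 in
/-- solutions to a linear φ-difference system in a base extension
`R ⊗_C B` by φ-constants form the `B`-span of the solutions in `R`. -/
theorem solutions_and_base_extension
    {K : Type*} [Field K] (φK : K →+* K)
    {C : Type*} [Field C] [Algebra C K]
    (hC : ∀ x : K, (∃ c : C, algebraMap C K c = x) ↔ φK x = x)
    {R : Type*} [CommRing R] [Algebra K R] [Algebra C R] [IsScalarTower C K R]
    (φR : R →+* R)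
    (hcompat : ∀ k : K, φR (algebraMap K R k) = algebraMap K R (φK k))
    {n : ℕ} (A : Matrix (Fin n) (Fin n) K) (hA : IsUnit A)
    {B : Type*} [CommRing B] [Algebra C B]
    (Φ : R ⊗[C] B →+* R ⊗[C] B)
    (hΦ : ∀ (r : R) (b : B), Φ (r ⊗ₜ[C] b) = φR r ⊗ₜ[C] b) :
    {y : Fin n → R ⊗[C] B | ∀ i, Φ (y i) =
        ∑ j, (algebraMap K R (A i j) ⊗ₜ[C] (1 : B)) * y j} =
      (Submodule.span B {y : Fin n → R ⊗[C] B | ∃ z : Fin n → R,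
          (∀ i, φR (z i) = ∑ j, algebraMap K R (A i j) * z j) ∧
          (y = fun i => z i ⊗ₜ[C] (1 : B))} : Set (Fin n → R ⊗[C] B)) := by
  classical
  -- φR fixes the image of C
  have hfixR : ∀ c : C, φR (algebraMap C R c) = algebraMap C R c := by
    intro c
    rw [IsScalarTower.algebraMap_apply C K R, hcompat,
      (hC (algebraMap C K c)).mp ⟨c, rfl⟩]
  -- the C-linear difference operator on `Fin n → R`
  have hφRlin : ∀ (c : C) (r : R), φR (c • r) = c • φR r := by
    intro c r
    rw [Algebra.smul_def, map_mul, hfixR, Algebra.smul_def]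
  set f : (Fin n → R) →ₗ[C] (Fin n → R) :=
    { toFun := fun z i => φR (z i) - ∑ j, algebraMap K R (A i j) * z j
      map_add' := by
        intro z w; funext i
        simp only [Pi.add_apply, map_add, mul_add, Finset.sum_add_distrib]
        ring
      map_smul' := by
        intro c z; funext i
        simp only [Pi.smul_apply, RingHom.id_apply, hφRlin, smul_sub, Finset.smul_sum,
          Algebra.mul_smul_comm] } with hf
  -- the equiv  (Fin n → R) ⊗ B ≃ (Fin n → R ⊗ B)
  set e : ((Fin n → R) ⊗[C] B) ≃ₗ[C] (Fin n → R ⊗[C] B) :=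
    (TensorProduct.comm C (Fin n → R) B).trans
      ((TensorProduct.piRight C C B (fun _ : Fin n => R)).trans
        (LinearEquiv.piCongrRight (fun _ : Fin n => TensorProduct.comm C B R))) with he
  have he_tmul : ∀ (z : Fin n → R) (b : B), e (z ⊗ₜ[C] b) = fun i => z i ⊗ₜ[C] b := by
    intro z b; rfl
  -- nonlinear version of the difference operator on the tensor product
  set F : (Fin n → R ⊗[C] B) → (Fin n → R ⊗[C] B) :=
    fun y i => Φ (y i) - ∑ j, (algebraMap K R (A i j) ⊗ₜ[C] (1 : B)) * y j with hF
  have hFadd : ∀ y w, F (y + w) = F y + F w := by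
    intro y w; funext i
    simp only [hF, Pi.add_apply, map_add, mul_add, Finset.sum_add_distrib]
    ring
  -- key commutation
  have hcomm : ∀ x : (Fin n → R) ⊗[C] B, e (f.rTensor B x) = F (e x) := by
    intro x
    induction x using TensorProduct.induction_on with
    | zero =>
        simp only [map_zero, hF]
        funext i
        simp
    | tmul z b =>
        rw [LinearMap.rTensor_tmul, he_tmul, he_tmul]
        funext i
        simp only [hF, hf, LinearMap.coe_mk, AddHom.coe_mk, hΦ,
          Algebra.TensorProduct.tmul_mul_tmul, one_mul,
          TensorProduct.sub_tmul, TensorProduct.sum_tmul]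
    | add x₁ x₂ h₁ h₂ =>
        rw [map_add, map_add, h₁, h₂, map_add, hFadd]
  -- solution set as zero set of F
  have hsol : ∀ y : Fin n → R ⊗[C] B,
      (∀ i, Φ (y i) = ∑ j, (algebraMap K R (A i j) ⊗ₜ[C] (1 : B)) * y j) ↔ F y = 0 := by
    intro y
    constructor
    · intro h; funext i; simp [hF, h i]
    · intro h i
      have := congrFun h i
      simpa [hF, sub_eq_zero] using this
  -- smul description
  have hsmul : ∀ (b : B) (x : R ⊗[C] B), b • x = (1 ⊗ₜ[C] b) * x := fun b x => rfl
  apply Set.Subset.antisymm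
  · -- solutions ⊆ span
    intro y hy
    have hy0 : f.rTensor B (e.symm y) = 0 := by
      apply e.injective
      rw [hcomm, e.apply_symm_apply, map_zero]
      exact ((hsol y).mp hy)
    obtain ⟨x, hx⟩ := (Module.Flat.rTensor_exact B
      (LinearMap.exact_subtype_ker_map f) (e.symm y)).mp hy0
    have hy' : y = e ((LinearMap.ker f).subtype.rTensor B x) := by
      rw [hx, e.apply_symm_apply]
    rw [hy']
    clear hy' hx hy hy0
    induction x using TensorProduct.induction_on with
    | zero => simp
    | tmul z b =>
        rw [LinearMap.rTensor_tmul, he_tmul]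
        have hz : ∀ i, φR ((z : Fin n → R) i) = ∑ j, algebraMap K R (A i j) * (z : Fin n → R) j := by
          intro i
          have := congrFun (LinearMap.mem_ker.mp z.2) i
          simp only [hf, LinearMap.coe_mk, AddHom.coe_mk, Pi.zero_apply, sub_eq_zero] at this
          exact this
        have hmem : (fun i => (z : Fin n → R) i ⊗ₜ[C] (1 : B)) ∈
            Submodule.span B {y : Fin n → R ⊗[C] B | ∃ z : Fin n → R,
              (∀ i, φR (z i) = ∑ j, algebraMap K R (A i j) * z j) ∧
              (y = fun i => z i ⊗ₜ[C] (1 : B))} :=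
          Submodule.subset_span ⟨(z : Fin n → R), hz, rfl⟩
        have : (fun i => (LinearMap.ker f).subtype z i ⊗ₜ[C] b) =
            b • fun i => (z : Fin n → R) i ⊗ₜ[C] (1 : B) := by
          funext i
          rw [Pi.smul_apply, hsmul, Algebra.TensorProduct.tmul_mul_tmul, one_mul, mul_one]
          rfl
        rw [this]
        exact Submodule.smul_mem _ b hmem
    | add x₁ x₂ h₁ h₂ =>
        rw [map_add, map_add]
        exact Submodule.add_mem _ h₁ h₂
  · -- span ⊆ solutions : the solution set is a B-submodule
    have hΦsmul : ∀ (b : B) (x : R ⊗[C] B), Φ (b • x) = b • Φ x := by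
      intro b x
      rw [hsmul, map_mul, hΦ, map_one, hsmul]
    set S : Submodule B (Fin n → R ⊗[C] B) :=
      { carrier := {y : Fin n → R ⊗[C] B | ∀ i, Φ (y i) =
          ∑ j, (algebraMap K R (A i j) ⊗ₜ[C] (1 : B)) * y j}
        add_mem' := by
          intro y w hy hw i
          simp only [Pi.add_apply, map_add, hy i, hw i, mul_add, Finset.sum_add_distrib]
        zero_mem' := by
          intro i; simp
        smul_mem' := by
          intro b y hy i
          simp only [Pi.smul_apply, hΦsmul, hy i, Finset.smul_sum, mul_smul_comm] } with hS
    have := Submodule.span_le (p := S)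
      (s := {y : Fin n → R ⊗[C] B | ∃ z : Fin n → R,
          (∀ i, φR (z i) = ∑ j, algebraMap K R (A i j) * z j) ∧
          (y = fun i => z i ⊗ₜ[C] (1 : B))})
    refine this.mpr ?_
    rintro y ⟨z, hz, rfl⟩ i
    rw [hΦ, hz i, TensorProduct.sum_tmul]
    exact Finset.sum_congr rfl fun j _ => by
      rw [Algebra.TensorProduct.tmul_mul_tmul, one_mul]
end

section
/- Let L be a field with a ring endomorphism φ_L : L → L, let α, a, b ∈ L with α ≠ 0, and let Φ be a ring endomorphism of the rational function field L(X) (the field of fractions of L[X]) satisfying Φ(l) = φ_L(l) for every constant l ∈ L and Φ(X) = α·X. If there exists g ∈ L(X) with Φ(g) = a·g + b, then there exists y ∈ L with φ_L(y) = a·y + b. -/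
open Polynomial

noncomputable def sigmaHom {L : Type*} [Field L] (φL : L →+* L) (α : L) : L[X] →+* L[X] :=
  (Polynomial.eval₂RingHom Polynomial.C (C α * X)).comp (Polynomial.mapRingHom φL)

lemma sigmaHom_apply {L : Type*} [Field L] (φL : L →+* L) (α : L) (p : L[X]) :
    sigmaHom φL α p = (p.map φL).comp (C α * X) := rfl

lemma sigmaHom_C {L : Type*} [Field L] (φL : L →+* L) (α : L) (c : L) :
    sigmaHom φL α (C c) = C (φL c) := by
  simp [sigmaHom_apply]

lemma sigmaHom_X {L : Type*} [Field L] (φL : L →+* L) (α : L) :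
    sigmaHom φL α X = C α * X := by
  simp [sigmaHom_apply]

lemma sigmaHom_eval_zero {L : Type*} [Field L] (φL : L →+* L) (α : L) (p : L[X]) :
    (sigmaHom φL α p).eval 0 = φL (p.eval 0) := by
  simp [sigmaHom_apply, eval_comp, eval_map, eval₂_at_zero, coeff_zero_eq_eval_zero]

lemma Phi_algebraMap {L : Type*} [Field L] (φL : L →+* L) (α : L)
    (Φ : RatFunc L →+* RatFunc L)
    (hconst : ∀ l : L, Φ (RatFunc.C l) = RatFunc.C (φL l))
    (hX : Φ RatFunc.X = RatFunc.C α * RatFunc.X) (p : L[X]) :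
    Φ (algebraMap L[X] (RatFunc L) p) = algebraMap L[X] (RatFunc L) (sigmaHom φL α p) := by
  induction p using Polynomial.induction_on with
  | C c => simp [RatFunc.algebraMap_C, hconst, sigmaHom_C]
  | add p q hp hq => simp [map_add, hp, hq]
  | monomial n c hc =>
    rw [pow_succ, ← mul_assoc, map_mul, map_mul, hc, map_mul, map_mul, RatFunc.algebraMap_X, hX]
    simp [map_mul, sigmaHom_X, RatFunc.algebraMap_C, RatFunc.algebraMap_X, mul_assoc]

lemma descent_aux {L : Type*} [Field L] (φL : L →+* L) (α a b : L) (hα : α ≠ 0) :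
    ∀ (n : ℕ) (p q₁ : L[X]), q₁.eval 0 ≠ 0 →
      sigmaHom φL α p * q₁
        = (C a * p + C b * X ^ n * q₁) * (C α ^ n * sigmaHom φL α q₁) →
      ∃ y : L, φL y = a * y + b := by
  intro n
  induction n with
  | zero =>
    intro p q₁ hQ E
    have hE0 := congrArg (Polynomial.eval 0) E
    simp [sigmaHom_eval_zero] at hE0
    have hφQ : φL (q₁.eval 0) ≠ 0 := fun h => hQ (φL.injective (by simpa using h))
    refine ⟨p.eval 0 / q₁.eval 0, ?_⟩
    rw [map_div₀]
    field_simp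
    linear_combination hE0
  | succ m ih =>
    intro p q₁ hQ E
    have hE0 := congrArg (Polynomial.eval 0) E
    simp [sigmaHom_eval_zero] at hE0
    have hφQ : φL (q₁.eval 0) ≠ 0 := fun h => hQ (φL.injective (by simpa using h))
    set c : L := p.eval 0 / q₁.eval 0 with hc
    have hφc : φL c = a * α ^ (m + 1) * c := by
      rw [hc, map_div₀]
      field_simp
      linear_combination hE0
    have hdvd : X ∣ (p - C c * q₁) := by
      rw [X_dvd_iff, coeff_zero_eq_eval_zero]
      simp only [eval_sub, eval_mul, eval_C, hc]
      field_simp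
      ring
    obtain ⟨p₂, hp₂⟩ := hdvd
    have hp : p = X * p₂ + C c * q₁ := by linear_combination hp₂
    have hσ : sigmaHom φL α p
        = C α * X * sigmaHom φL α p₂ + C (φL c) * sigmaHom φL α q₁ := by
      rw [hp]
      simp [map_add, map_mul, sigmaHom_X, sigmaHom_C]
    have hCc : (C (φL c) : L[X]) = C a * C α ^ (m + 1) * C c := by
      rw [hφc]; simp [C_mul, C_pow]
    rw [hσ, hCc, hp] at E
    refine ih p₂ q₁ hQ (mul_left_cancel₀ (show (C α * X : L[X]) ≠ 0 by
      simp [hα, X_ne_zero, mul_ne_zero, C_ne_zero]) ?_)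
    linear_combination E


/-- if the equation `Φ(y) = a y + b` has a solution in `L(X)`, where
`Φ` restricts to `φ_L` on constants and sends `X` to `α X`, then the equation
`φ_L(y) = a y + b` already has a solution in `L`. -/
theorem descent_of_solution_of_inhomogeneous_equation
    {L : Type*} [Field L] (φL : L →+* L) (α a b : L) (hα : α ≠ 0)
    (Φ : RatFunc L →+* RatFunc L)
    (hconst : ∀ l : L, Φ (RatFunc.C l) = RatFunc.C (φL l))
    (hX : Φ RatFunc.X = RatFunc.C α * RatFunc.X)
    (h : ∃ g : RatFunc L, Φ g = RatFunc.C a * g + RatFunc.C b) :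
    ∃ y : L, φL y = a * y + b := by
  obtain ⟨g, hg⟩ := h
  have hq := g.denom_ne_zero
  obtain ⟨q₁, hfac, hndvd⟩ :=
    g.denom.exists_eq_pow_rootMultiplicity_mul_and_not_dvd hq 0
  rw [map_zero, sub_zero] at hfac hndvd
  set n := g.denom.rootMultiplicity 0 with hn
  set p := g.num with hp
  have hQ : q₁.eval 0 ≠ 0 := fun h0 =>
    hndvd (X_dvd_iff.mpr (by rw [coeff_zero_eq_eval_zero]; exact h0))
  have hq₁ : q₁ ≠ 0 := fun h0 => hQ (by simp [h0])
  set σ := sigmaHom φL α with hσdef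
  have hσq₁ : σ q₁ ≠ 0 := fun h0 => by
    have := sigmaHom_eval_zero φL α q₁
    rw [← hσdef, h0] at this
    exact hQ (φL.injective (by simpa using this.symm))
  have hσmul : σ (X ^ n * q₁) = (C α * X) ^ n * σ q₁ := by
    simp [hσdef, map_mul, map_pow, sigmaHom_X]
  have hg' : g = algebraMap L[X] (RatFunc L) p / algebraMap L[X] (RatFunc L) (X ^ n * q₁) := by
    rw [← hfac]; exact (RatFunc.num_div_denom g).symm
  have hΦg : Φ g = algebraMap L[X] (RatFunc L) (σ p)
      / algebraMap L[X] (RatFunc L) (σ (X ^ n * q₁)) := by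
    rw [hg', map_div₀, Phi_algebraMap φL α Φ hconst hX, Phi_algebraMap φL α Φ hconst hX]
  have hA1 : algebraMap L[X] (RatFunc L) (X ^ n * q₁) ≠ 0 :=
    RatFunc.algebraMap_ne_zero (mul_ne_zero (pow_ne_zero _ X_ne_zero) hq₁)
  have hA2 : algebraMap L[X] (RatFunc L) (σ (X ^ n * q₁)) ≠ 0 :=
    RatFunc.algebraMap_ne_zero (by
      rw [hσmul]
      exact mul_ne_zero (pow_ne_zero _ (mul_ne_zero (C_ne_zero.mpr hα) X_ne_zero)) hσq₁)
  rw [hΦg, hg', ← RatFunc.algebraMap_C a, ← RatFunc.algebraMap_C b] at hg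
  have hg2 : algebraMap L[X] (RatFunc L) (σ p) * algebraMap L[X] (RatFunc L) (X ^ n * q₁)
      = (algebraMap L[X] (RatFunc L) (C a) * algebraMap L[X] (RatFunc L) p
          + algebraMap L[X] (RatFunc L) (C b) * algebraMap L[X] (RatFunc L) (X ^ n * q₁))
        * algebraMap L[X] (RatFunc L) (σ (X ^ n * q₁)) := by
    have key : (algebraMap L[X] (RatFunc L) (C a) * algebraMap L[X] (RatFunc L) p
          + algebraMap L[X] (RatFunc L) (C b) * algebraMap L[X] (RatFunc L) (X ^ n * q₁))
          / algebraMap L[X] (RatFunc L) (X ^ n * q₁)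
        = algebraMap L[X] (RatFunc L) (C a)
            * (algebraMap L[X] (RatFunc L) p / algebraMap L[X] (RatFunc L) (X ^ n * q₁))
          + algebraMap L[X] (RatFunc L) (C b) := by
      rw [add_div, mul_div_assoc, mul_div_cancel_right₀ _ hA1]
    rw [← key, div_eq_div_iff hA2 hA1] at hg
    linear_combination hg
  simp only [← map_mul, ← map_add] at hg2
  have Epoly := IsFractionRing.injective L[X] (RatFunc L) hg2
  rw [hσmul] at Epoly
  refine descent_aux φL α a b hα n p q₁ hQ
    (mul_left_cancel₀ (pow_ne_zero n (X_ne_zero (R := L))) ?_)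
  linear_combination Epoly
end

section
/- Let K ⊆ L be fields and φ : L → L a ring endomorphism with φ(K) ⊆ K. Suppose (i) there is an increasing family (M_i)_{i∈ℕ} of intermediate fields K ⊆ M_i ⊆ L with ⋃_i M_i = L, φ(M_i) ⊆ M_i for all i, and each M_i finitely generated as a field extension of K; and (ii) every intermediate field N with K ⊆ N ⊆ L, φ(N) ⊆ N, and N of finite dimension as a K-vector space satisfies N = K. Then K is relatively algebraically closed in L: every element of L that is algebraic over K lies in K. -/
section Transfer

variable {R₁ R₂ E : Type*} [CommRing R₁] [CommRing R₂] [CommRing E]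

/-- Transfer a ring hom along compatible injections. -/
noncomputable def transferHom (f₁ : R₁ →+* E) (f₂ : R₂ →+* E)
    (hf₂ : Function.Injective f₂) (h : ∀ r, ∃ r', f₂ r' = f₁ r) : R₁ →+* R₂ where
  toFun r := (h r).choose
  map_one' := hf₂ (by rw [(h 1).choose_spec, map_one, map_one])
  map_mul' a b := hf₂ (by
    rw [(h (a * b)).choose_spec, map_mul, map_mul, (h a).choose_spec, (h b).choose_spec])
  map_zero' := hf₂ (by rw [(h 0).choose_spec, map_zero, map_zero])
  map_add' a b := hf₂ (by
    rw [(h (a + b)).choose_spec, map_add, map_add, (h a).choose_spec, (h b).choose_spec])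

theorem transferHom_spec (f₁ : R₁ →+* E) (f₂ : R₂ →+* E)
    (hf₂ : Function.Injective f₂) (h : ∀ r, ∃ r', f₂ r' = f₁ r) (r : R₁) :
    f₂ (transferHom f₁ f₂ hf₂ h r) = f₁ r := (h r).choose_spec

end Transfer

section AlgTransfer

variable {R₁ R₂ E : Type*} [CommRing R₁] [CommRing R₂] [Field E]
  [Algebra R₁ E] [Algebra R₂ E]

theorem isAlgebraic_transfer (h1 : Function.Injective (algebraMap R₁ E))
    (h2 : Function.Injective (algebraMap R₂ E))
    (h : ∀ r, ∃ r', algebraMap R₂ E r' = algebraMap R₁ E r) {e : E}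
    (he : IsAlgebraic R₁ e) : IsAlgebraic R₂ e := by
  obtain ⟨p, hp, hpe⟩ := he
  set ψ := transferHom (algebraMap R₁ E) (algebraMap R₂ E) h2 h with hψdef
  have hψ : ∀ r, algebraMap R₂ E (ψ r) = algebraMap R₁ E r := transferHom_spec _ _ _ _
  have hψinj : Function.Injective ψ := fun a b hab => h1 (by rw [← hψ, hab, hψ])
  refine ⟨p.map ψ, Polynomial.map_ne_zero_iff hψinj |>.mpr hp, ?_⟩
  rw [Polynomial.aeval_def, Polynomial.eval₂_map,
    show (algebraMap R₂ E).comp ψ = algebraMap R₁ E from RingHom.ext hψ]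
  exact hpe

end AlgTransfer

section Frac

variable {K E : Type*} [Field K] [Field E] [Algebra K E]

noncomputable instance adjAlg (s : Set E) :
    Algebra (Algebra.adjoin K s) (IntermediateField.adjoin K s) :=
  (Subalgebra.inclusion (IntermediateField.algebra_adjoin_le_adjoin K s)).toAlgebra

instance adjTower (s : Set E) :
    IsScalarTower (Algebra.adjoin K s) (IntermediateField.adjoin K s) E :=
  IsScalarTower.of_algebraMap_eq fun _ => rfl

theorem adjFrac (s : Set E) :
    IsFractionRing (Algebra.adjoin K s) (IntermediateField.adjoin K s) := by
  have hinj : Function.Injective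
      (algebraMap (Algebra.adjoin K s) (IntermediateField.adjoin K s)) :=
    Subalgebra.inclusion_injective _
  refine (isLocalization_iff (nonZeroDivisors (Algebra.adjoin K s))
    (IntermediateField.adjoin K s)).mpr ⟨?_, ?_, ?_⟩
  · rintro ⟨y, hy⟩
    rw [mem_nonZeroDivisors_iff_ne_zero] at hy
    exact isUnit_iff_ne_zero.mpr (fun h => hy (hinj (by rw [h, map_zero])))
  · rintro z
    obtain ⟨r, d, hz⟩ := (IntermediateField.mem_adjoin_iff K (z : E)).mp z.2
    have hmem : ∀ q : MvPolynomial s K, MvPolynomial.aeval Subtype.val q ∈ Algebra.adjoin K s := by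
      intro q
      have : Algebra.adjoin K s = (MvPolynomial.aeval (Subtype.val : s → E)).range := by
        rw [← Algebra.adjoin_range_eq_range_aeval, Subtype.range_coe]
      rw [this]
      exact ⟨q, rfl⟩
    by_cases hd : MvPolynomial.aeval (Subtype.val : s → E) d = 0
    · refine ⟨⟨0, 1⟩, ?_⟩
      have : (z : E) = 0 := by rw [hz, hd, div_zero]
      have hz0 : z = 0 := Subtype.ext this
      simp [hz0]
    · refine ⟨⟨⟨_, hmem r⟩, ⟨⟨_, hmem d⟩, mem_nonZeroDivisors_of_ne_zero ?_⟩⟩, ?_⟩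
      · intro h0
        exact hd (congrArg Subtype.val h0)
      · apply Subtype.ext
        show (z : E) * MvPolynomial.aeval Subtype.val d = MvPolynomial.aeval Subtype.val r
        rw [hz, div_mul_cancel₀ _ hd]
  · intro a b hab
    exact ⟨1, by rw [hinj hab]⟩

end Frac

section P1

variable {K E : Type*} [Field K] [Field E] [Algebra K E]

set_option synthInstance.maxHeartbeats 1000000 in
set_option maxHeartbeats 1000000 in
theorem algebraicIndependent_algClosure {ι : Type*} {x : ι → E}
    (hx : AlgebraicIndependent K x) :
    AlgebraicIndependent (algebraicClosure K E) x := by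
  refine algebraicIndependent_of_finite_type'
    (algebraMap (algebraicClosure K E) E).injective ?_
  intro t _ _ i hit
  intro halg
  have h1 : AlgebraicIndependent K (x ∘ (Subtype.val : t → ι)) :=
    hx.comp _ Subtype.val_injective
  have h2 : AlgebraicIndependent K (fun o : Option t => o.elim (x i) (x ∘ Subtype.val)) := by
    have hinj : Function.Injective (fun o : Option t => o.elim i Subtype.val) := by
      rintro (_ | a) (_ | b) hab
      · rfl
      · exact absurd (show i = (b : ι) from hab) (by rintro rfl; exact hit b.2)
      · exact absurd (show (a : ι) = i from hab) (by rintro rfl; exact hit a.2)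
      · simp only [Option.elim] at hab
        rw [Subtype.ext hab]
    have h3 := hx.comp (fun o : Option t => o.elim i Subtype.val) hinj
    have : (x ∘ fun o : Option t => o.elim i Subtype.val)
        = fun o : Option t => o.elim (x i) (x ∘ Subtype.val) := by
      funext o; cases o <;> rfl
    rwa [this] at h3
  have htr : Transcendental (Algebra.adjoin K (x '' t)) (x i) := by
    have := (h1.option_iff_transcendental (x i)).mp h2
    rwa [Set.range_comp, Subtype.range_coe] at this
  apply htr
  set Kt := IntermediateField.adjoin K (x '' t) with hKtdef
  set G := IntermediateField.adjoin (↥Kt) ((algebraicClosure K E : Set E)) with hGdef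
  have hsub : ∀ z ∈ Algebra.adjoin (↥(algebraicClosure K E)) (x '' t), z ∈ G := by
    intro z hz
    induction hz using Algebra.adjoin_induction with
    | mem y hy =>
        have hyKt : y ∈ Kt := IntermediateField.subset_adjoin _ _ hy
        exact G.algebraMap_mem ⟨y, hyKt⟩
    | algebraMap c =>
        exact IntermediateField.subset_adjoin _ _ c.2
    | add a b _ _ ha hb => exact G.add_mem ha hb
    | mul a b _ _ ha hb => exact G.mul_mem ha hb
  have hvS : ∀ r : ↥(Algebra.adjoin (↥(algebraicClosure K E)) (x '' t)),
      algebraMap (↥(Algebra.adjoin (↥(algebraicClosure K E)) (x '' t))) E r = (r : E) :=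
    fun _ => rfl
  have hvG : ∀ r : ↥G, algebraMap (↥G) E r = (r : E) := fun _ => rfl
  have hG : IsAlgebraic (↥G) (x i) :=
    isAlgebraic_transfer
      (R₁ := ↥(Algebra.adjoin (↥(algebraicClosure K E)) (x '' t))) (R₂ := ↥G) (E := E)
      (fun a b h => Subtype.ext (by rw [← hvS a, ← hvS b, h]))
      (algebraMap (↥G) E).injective
      (fun r => ⟨⟨(r : E), hsub _ r.2⟩, by rw [hvG, hvS]⟩) halg
  haveI : Algebra.IsIntegral (↥Kt) (↥G) := by
    have : Algebra.IsAlgebraic (↥Kt) (↥G) :=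
      IntermediateField.isAlgebraic_adjoin (fun y hy =>
        IsIntegral.tower_top (A := ↥Kt) (mem_algebraicClosure_iff'.mp hy))
    exact Algebra.isAlgebraic_iff_isIntegral.mp this
  have hKt : IsIntegral (↥Kt) (x i) := isIntegral_trans (x i) hG.isIntegral
  haveI := adjFrac (K := K) (E := E) (x '' t)
  exact (IsFractionRing.isAlgebraic_iff (Algebra.adjoin K (x '' t)) (↥Kt) E).mpr hKt.isAlgebraic

end P1

section P2

variable {K E : Type*} [Field K] [Field E] [Algebra K E]

set_option maxHeartbeats 1000000 in
set_option synthInstance.maxHeartbeats 1000000 in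
theorem li_adjoin_of_li {ι κ : Type*} {x : ι → E} (hx : AlgebraicIndependent K x)
    {a : κ → E} (ha : ∀ j, IsIntegral K (a j)) (hli : LinearIndependent K a) :
    LinearIndependent (IntermediateField.adjoin K (Set.range x)) a := by
  haveI := adjFrac (K := K) (E := E) (Set.range x)
  refine (LinearIndependent.iff_fractionRing (Algebra.adjoin K (Set.range x))
    (IntermediateField.adjoin K (Set.range x)) (V := E)).mp ?_
  have hAI := algebraicIndependent_algClosure hx
  rw [linearIndependent_iff']
  intro u g hsum j hj
  have hrep : ∀ j, ∃ q : MvPolynomial ι K, MvPolynomial.aeval x q = ((g j : E)) := by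
    intro j
    have h2 : ((g j : E)) ∈ (MvPolynomial.aeval x).range :=
      SetLike.ext_iff.mp (Algebra.adjoin_range_eq_range_aeval K x) _ |>.mp (g j).2
    obtain ⟨q, hq⟩ := h2
    exact ⟨q, hq⟩
  choose p hp using hrep
  set A := algebraicClosure K E with hAdef
  set q : MvPolynomial ι (↥A) :=
    ∑ j ∈ u, MvPolynomial.C (⟨a j, ha j⟩ : ↥A) * ((p j).map (algebraMap K ↥A)) with hqdef
  have hvA : ∀ r : ↥A, algebraMap (↥A) E r = (r : E) := fun _ => rfl
  have hvR : ∀ r : ↥(Algebra.adjoin K (Set.range x)),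
      algebraMap (↥(Algebra.adjoin K (Set.range x))) E r = (r : E) := fun _ => rfl
  have hq0 : MvPolynomial.aeval x q = 0 := by
    rw [hqdef, map_sum]
    have hterm : ∀ j ∈ u, MvPolynomial.aeval x
        (MvPolynomial.C (⟨a j, ha j⟩ : ↥A) * ((p j).map (algebraMap K ↥A)))
        = g j • a j := by
      intro j _
      rw [map_mul, MvPolynomial.aeval_C, MvPolynomial.aeval_map_algebraMap, hp j, hvA,
        Algebra.smul_def, hvR]
      ring
    rw [Finset.sum_congr rfl hterm, hsum]
  have hq : q = 0 := hAI.eq_zero_of_aeval_eq_zero q hq0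
  have hval : ∀ m : ι →₀ ℕ, ∑ j ∈ u, (MvPolynomial.coeff m (p j)) • a j = 0 := by
    intro m
    have h1 : MvPolynomial.coeff m q = 0 := by rw [hq, MvPolynomial.coeff_zero]
    rw [hqdef, MvPolynomial.coeff_sum] at h1
    simp_rw [MvPolynomial.coeff_C_mul, MvPolynomial.coeff_map] at h1
    have h3 := congrArg (algebraMap (↥A) E) h1
    rw [map_sum, map_zero] at h3
    rw [← h3]
    refine Finset.sum_congr rfl fun j _ => ?_
    rw [map_mul, hvA, Algebra.smul_def, ← IsScalarTower.algebraMap_apply K (↥A) E]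
    ring
  have hp0 : p j = 0 := by
    apply MvPolynomial.ext
    intro m
    have := linearIndependent_iff'.1 hli u (fun j => MvPolynomial.coeff m (p j)) (hval m) j hj
    simpa using this
  have hgj : (g j : E) = 0 := by rw [← hp j, hp0, map_zero]
  exact Subtype.ext hgj

end P2

section FIN

variable {K E : Type*} [Field K] [Field E] [Algebra K E]

set_option maxHeartbeats 1000000 in
set_option synthInstance.maxHeartbeats 1000000 in
theorem finiteDimensional_algClosure (S : Finset E)
    (hS : IntermediateField.adjoin K (S : Set E) = ⊤) :
    FiniteDimensional K (algebraicClosure K E) := by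
  obtain ⟨s, hs⟩ := exists_isTranscendenceBasis K E
  set F := IntermediateField.adjoin K s with hF
  haveI halg : Algebra.IsAlgebraic (↥F) E := by
    have := hs.isAlgebraic_field
    rwa [Subtype.range_coe] at this
  haveI hFD : FiniteDimensional (↥F) E := by
    have htop : IntermediateField.adjoin (↥F) ((S : Set E)) = ⊤ := by
      apply IntermediateField.restrictScalars_injective K
      rw [IntermediateField.restrictScalars_top, IntermediateField.restrictScalars_adjoin,
        eq_top_iff, ← hS]
      exact IntermediateField.adjoin.mono _ _ _ Set.subset_union_right
    have hfd : FiniteDimensional (↥F) (IntermediateField.adjoin (↥F) ((S : Set E))) :=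
      IntermediateField.finiteDimensional_adjoin (fun y _ => ((halg.isAlgebraic y).isIntegral))
    rw [htop] at hfd
    exact (IntermediateField.topEquiv (F := ↥F) (E := E)).toLinearEquiv.finiteDimensional
  have hbound : ∀ t : Finset (↥(algebraicClosure K E)),
      (LinearIndependent K fun i : t => (i : ↥(algebraicClosure K E))) →
      t.card ≤ Module.finrank (↥F) E := by
    intro t hli
    have hliE : LinearIndependent K (fun i : t => ((i : ↥(algebraicClosure K E)) : E)) := by
      have := hli.map' (algebraicClosure K E).val.toLinearMap
        (LinearMap.ker_eq_bot.mpr Subtype.val_injective)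
      exact this
    have hliF : LinearIndependent (↥F) (fun i : t => ((i : ↥(algebraicClosure K E)) : E)) := by
      have := li_adjoin_of_li (a := fun i : t => ((i : ↥(algebraicClosure K E)) : E)) hs.1
        (fun i => mem_algebraicClosure_iff'.mp (i : ↥(algebraicClosure K E)).2) hliE
      rwa [Subtype.range_coe] at this
    simpa using hliF.fintype_card_le_finrank
  have hrank : Module.rank K (↥(algebraicClosure K E)) ≤ (Module.finrank (↥F) E : Cardinal) :=
    rank_le hbound
  exact Module.rank_lt_aleph0_iff.mp (hrank.trans_lt (Cardinal.nat_lt_aleph0 _))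

end FIN


set_option maxHeartbeats 1000000 in
set_option synthInstance.maxHeartbeats 1000000 in
/-- if `L` is a union of an increasing chain of `φ`-stable intermediate
fields finitely generated over `K`, and every `φ`-stable intermediate field of finite
`K`-dimension is trivial, then `K` is relatively algebraically closed in `L`. -/
theorem relatively_algebraically_closed_of_no_finite_stable_extension
    {K L : Type*} [Field K] [Field L] [Algebra K L]
    (φ : L →+* L)
    (hφK : ∀ k : K, ∃ k' : K, φ (algebraMap K L k) = algebraMap K L k')
    (M : ℕ → IntermediateField K L)
    (hmono : Monotone M)
    (hunion : ∀ x : L, ∃ i, x ∈ M i)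
    (hstable : ∀ i, ∀ x ∈ M i, φ x ∈ M i)
    (hfg : ∀ i, ∃ S : Finset L, M i = IntermediateField.adjoin K (S : Set L))
    (hmin : ∀ N : IntermediateField K L, (∀ x ∈ N, φ x ∈ N) →
      FiniteDimensional K N → N = ⊥) :
    ∀ x : L, IsAlgebraic K x → ∃ k : K, algebraMap K L k = x := by
  intro x hx
  obtain ⟨i, hxM⟩ := hunion x
  have hKinj : Function.Injective (algebraMap K L) := (algebraMap K L).injective
  set ψ := transferHom (φ.comp (algebraMap K L)) (algebraMap K L) hKinj
    (fun k => (hφK k).imp (fun k' h => h.symm)) with hψdef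
  have hψ : ∀ k, algebraMap K L (ψ k) = φ (algebraMap K L k) := transferHom_spec _ _ _ _
  have hφalg : ∀ y : L, IsAlgebraic K y → IsAlgebraic K (φ y) := by
    rintro y ⟨p, hp, hpy⟩
    refine ⟨p.map ψ, Polynomial.map_ne_zero_iff ψ.injective |>.mpr hp, ?_⟩
    rw [Polynomial.aeval_def, Polynomial.eval₂_map,
      show (algebraMap K L).comp ψ = φ.comp (algebraMap K L) from RingHom.ext hψ,
      ← Polynomial.hom_eval₂, show Polynomial.eval₂ (algebraMap K L) y p = 0 from hpy,
      map_zero]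
  set N := algebraicClosure K L ⊓ M i with hNdef
  have hstab : ∀ z ∈ N, φ z ∈ N := by
    intro z hz
    obtain ⟨hz1, hz2⟩ := IntermediateField.mem_inf.mp hz
    exact IntermediateField.mem_inf.mpr
      ⟨mem_algebraicClosure_iff.mpr (hφalg z (mem_algebraicClosure_iff.mp hz1)),
       hstable i z hz2⟩
  obtain ⟨S, hSM⟩ := hfg i
  have hST : ∀ y ∈ S, y ∈ M i := fun y hy => hSM ▸ IntermediateField.subset_adjoin K _ hy
  classical
  let T : Finset (↥(M i)) := S.subtype (· ∈ M i)
  have hTcoe : ⇑(M i).val '' (T : Set (↥(M i))) = (S : Set L) := by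
    ext y
    simp only [Set.mem_image, Finset.mem_coe, Finset.mem_subtype]
    constructor
    · rintro ⟨z, hz, rfl⟩
      simpa [T] using hz
    · intro hy
      exact ⟨⟨y, hST y hy⟩, by simpa [T] using hy, rfl⟩
  have htopE : IntermediateField.adjoin K (T : Set (↥(M i))) = ⊤ := by
    apply IntermediateField.map_injective (M i).val
    rw [IntermediateField.adjoin_map, hTcoe]
    rw [← hSM]
    exact (IntermediateField.lift_top (F := K) (E := L) (M i)).symm
  haveI hACfd := finiteDimensional_algClosure T htopE
  haveI hNfd : FiniteDimensional K ↥N := by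
    let f : (↥N) →ₗ[K] { z : ↥(M i) // z ∈ algebraicClosure K (↥(M i)) } :=
      { toFun := fun z => ⟨⟨(z : L), (IntermediateField.mem_inf.mp z.2).2⟩,
          (isIntegral_algHom_iff (M i).val Subtype.val_injective).mp
            (mem_algebraicClosure_iff'.mp (IntermediateField.mem_inf.mp z.2).1)⟩
        map_add' := fun a b => rfl
        map_smul' := fun c a => rfl }
    refine FiniteDimensional.of_injective f ?_
    intro a b h
    exact Subtype.ext (congrArg
      (fun w : { z : ↥(M i) // z ∈ algebraicClosure K (↥(M i)) } => ((w : ↥(M i)) : L)) h)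
  have hbot : N = ⊥ := hmin N hstab hNfd
  have hxN : x ∈ N := IntermediateField.mem_inf.mpr ⟨mem_algebraicClosure_iff.mpr hx, hxM⟩
  rw [hbot] at hxN
  obtain ⟨k, hk⟩ := IntermediateField.mem_bot.mp hxN
  exact ⟨k, hk⟩
end
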